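/- arXiv:1907.07837 — 7 statements merged into one kernel-verified Lean document; each statement's English description precedes it below -/
import Mathlib

section
/- For any signed graph (G, σ) with n vertices, r(G,σ) + 2α(G) ≤ 2n, where r(G,σ) is the rank of the signed adjacency matrix and α(G) the independence number of the underlying graph. -/
/-!
The `s × s` block of the signed adjacency matrix vanishes on a maximum independent set `s`.
Split the matrix into its rows outside `s` and its rows inside `s`: the first part has at most
`n - α` nonzero rows, the second at most `n - α` nonzero columns, so by subadditivity of rank
`r ≤ 2 (n - α)`.
-/

open SimpleGraph
open scoped Classical

noncomputable section

/-- The adjacency matrix of a signed graph `(G, σ)`. -/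
def sAdj {V : Type*} [Fintype V] (G : SimpleGraph V) (σ : Sym2 V → ℝ) : Matrix V V ℝ :=
  fun i j => if G.Adj i j then σ s(i, j) else 0

/-- The rank of a signed graph. -/
def srank {V : Type*} [Fintype V] (G : SimpleGraph V) (σ : Sym2 V → ℝ) : ℕ :=
  (sAdj G σ).rank

/-- The independence number of a graph. -/
def indepNum {V : Type*} (G : SimpleGraph V) : ℕ :=
  sSup {n | ∃ s : Finset V, (∀ a ∈ s, ∀ b ∈ s, ¬ G.Adj a b) ∧ s.card = n}

/-- The matching number of a graph. -/
def matchNum {V : Type*} (G : SimpleGraph V) : ℕ :=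
  sSup {n | ∃ M : G.Subgraph, M.IsMatching ∧ M.edgeSet.ncard = n}

/-- The cyclomatic number `|E| - |V| + ω` of a graph (as a natural number;
the quantity is always nonnegative). -/
def cyclomatic {V : Type*} [Fintype V] (G : SimpleGraph V) : ℕ :=
  G.edgeSet.ncard + Nat.card G.ConnectedComponent - Fintype.card V

/-- Deleting a set of vertices from a graph: the induced subgraph on the complement. -/
def vdel {V : Type*} (G : SimpleGraph V) (S : Set V) : SimpleGraph ↥(Sᶜ) :=
  G.induce Sᶜ

/-- Restriction of a sign function to a set of vertices. -/
def σres {V : Type*} (σ : Sym2 V → ℝ) (s : Set V) : Sym2 s → ℝ :=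
  fun e => σ (e.map Subtype.val)

/-- A signed graph is lower-optimal if `r + 2α = 2n - 2c`. -/
def lowerOptimal {V : Type*} [Fintype V] (G : SimpleGraph V) (σ : Sym2 V → ℝ) : Prop :=
  srank G σ + 2 * _root_.indepNum G + 2 * cyclomatic G = 2 * Fintype.card V

namespace Matrix

variable {m n K : Type*} [Fintype n] [Field K]

theorem rank_add_le (A B : Matrix m n K) : (A + B).rank ≤ A.rank + B.rank := by
  unfold rank
  rw [mulVecLin_add]
  calc Module.finrank K (LinearMap.range (A.mulVecLin + B.mulVecLin))
      ≤ Module.finrank K ↥(LinearMap.range A.mulVecLin ⊔ LinearMap.range B.mulVecLin) :=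
        Submodule.finrank_mono (LinearMap.range_add_le _ _)
    _ ≤ _ := Submodule.finrank_add_le_finrank_add_finrank _ _

theorem rank_le_card_compl_add_card_compl [Fintype m] [DecidableEq m] [DecidableEq n]
    (A : Matrix m n K) (s : Finset m) (t : Finset n) (hA : ∀ i ∈ s, ∀ j ∈ t, A i j = 0) :
    A.rank ≤ sᶜ.card + tᶜ.card := by
  let B : Matrix m n K := of fun i j => if i ∈ s then 0 else A i j
  let C : Matrix m n K := of fun i j => if i ∈ s then A i j else 0
  have hBC : A = B + C := by
    ext i j
    by_cases hi : i ∈ s <;> simp [B, C, hi]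
  have hB : B.rank ≤ sᶜ.card :=
    rank_le_card_of_support_subset _ _ fun i hi =>
      Finset.mem_compl.mpr fun his => hi (funext fun j => by simp [B, his])
  have hC : C.rank ≤ tᶜ.card := by
    rw [← rank_transpose]
    refine rank_le_card_of_support_subset _ _ fun j hj =>
      Finset.mem_compl.mpr fun hjt => hj (funext fun i => ?_)
    by_cases hi : i ∈ s
    · simp [C, hi, hA i hi j hjt]
    · simp [C, hi]
  calc A.rank = (B + C).rank := by rw [← hBC]
    _ ≤ B.rank + C.rank := rank_add_le B C
    _ ≤ sᶜ.card + tᶜ.card := add_le_add hB hC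

end Matrix

theorem indepNum_eq_simpleGraph_indepNum {V : Type*} (G : SimpleGraph V) :
    _root_.indepNum G = G.indepNum := by
  unfold _root_.indepNum SimpleGraph.indepNum
  congr! 3 with n
  refine exists_congr fun s => .trans (and_congr_left fun _ => ?_) (isNIndepSet_iff G n s).symm
  simp only [isIndepSet_iff, Set.Pairwise, Finset.mem_coe]
  exact ⟨fun h a ha b hb _ => h a ha b hb, fun h a ha b hb hab => h ha hb (G.ne_of_adj hab) hab⟩

theorem sAdj_eq_zero_of_isIndepSet {V : Type*} [Fintype V] {G : SimpleGraph V}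
    (σ : Sym2 V → ℝ) {s : Set V} (hs : G.IsIndepSet s) {i j : V} (hi : i ∈ s) (hj : j ∈ s) :
    sAdj G σ i j = 0 := by
  rcases eq_or_ne i j with rfl | hij
  · simp [sAdj]
  · simp [sAdj, hs hi hj hij]

theorem rank_add_two_indepNum_le_general {V : Type*} [Fintype V] (G : SimpleGraph V)
    (σ : Sym2 V → ℝ) :
    srank G σ + 2 * _root_.indepNum G ≤ 2 * Fintype.card V := by
  obtain ⟨s, hs_indep, hs_card⟩ := G.exists_isNIndepSet_indepNum
  have hrank := (sAdj G σ).rank_le_card_compl_add_card_compl s s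
    fun i hi j hj => sAdj_eq_zero_of_isIndepSet σ hs_indep hi hj
  have hs_le : s.card ≤ Fintype.card V := s.card_le_univ
  rw [Finset.card_compl] at hrank
  rw [indepNum_eq_simpleGraph_indepNum, ← hs_card, srank]
  omega

theorem rank_add_two_indepNum_le {V : Type*} [Fintype V] (G : SimpleGraph V)
    (σ : Sym2 V → ℝ) (hσ : ∀ e ∈ G.edgeSet, σ e = 1 ∨ σ e = -1) :
    srank G σ + 2 * _root_.indepNum G ≤ 2 * Fintype.card V :=
  rank_add_two_indepNum_le_general G σ
end
end

section
/- For any signed graph (G, σ) with n vertices, 2n − 2c(G) ≤ r(G,σ) + 2α(G), where c(G) = |E(G)| − |V(G)| + ω(G) is the cyclomatic number (ω(G) the number of connected components). -/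
open SimpleGraph
open scoped Classical

noncomputable section

namespace SimpleGraph

variable {V : Type*} {G : SimpleGraph V} {s : Set V}

theorem exists_reachable_induce_adj_notMem {w : s} {x : V} (hx : x ∉ s) (h : G.Reachable w x) :
    ∃ (w' : s) (y : V), y ∉ s ∧ G.Adj w' y ∧ (G.induce s).Reachable w w' := by
  obtain ⟨p⟩ := h
  obtain ⟨d, -, ⟨hd, hwd⟩, hd'⟩ := p.exists_boundary_dart
    {v | ∃ h : v ∈ s, (G.induce s).Reachable w ⟨v, h⟩} ⟨w.2, Reachable.refl _⟩
    (fun ⟨h, _⟩ => hx h)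
  exact ⟨⟨d.fst, hd⟩, d.snd, fun h => hd' ⟨h, hwd.trans (induce_adj.2 d.adj).reachable⟩,
    d.adj, hwd⟩

theorem card_connectedComponent_induce_lt [Finite V] (hs : sᶜ.Nonempty) (W : Set s)
    (hW : ∀ (w : s) (x : V), x ∉ s → G.Adj w x →
      ∃ w' ∈ W, (G.induce s).Reachable w w') :
    Nat.card (G.induce s).ConnectedComponent < Nat.card G.ConnectedComponent + W.ncard := by
  set φ := ConnectedComponent.map (Embedding.induce s).toHom
  set K := G.connectedComponentMk '' sᶜ
  have hA : φ ⁻¹' K ⊆ (G.induce s).connectedComponentMk '' W := by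
    intro C hC
    induction C using ConnectedComponent.ind with | h w => ?_
    obtain ⟨x, hx, hxw⟩ := hC
    obtain ⟨w', y, hy, hw'y, hww'⟩ :=
      exists_reachable_induce_adj_notMem hx (ConnectedComponent.exact hxw).symm
    obtain ⟨w'', hw'', hw'w''⟩ := hW w' y hy hw'y
    exact ⟨w'', hw'', ConnectedComponent.sound (hww'.trans hw'w'').symm⟩
  have hB : Set.InjOn φ (φ ⁻¹' K)ᶜ := by
    intro C hC D _ hCD
    induction C, D using ConnectedComponent.ind₂ with | h y z => ?_
    obtain ⟨p⟩ := ConnectedComponent.exact hCD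
    have hp : ∀ x ∈ p.support, x ∈ s := fun x hx => by
      by_contra hxs
      exact hC ⟨x, hxs, ConnectedComponent.sound (p.takeUntil x hx).reachable.symm⟩
    exact ConnectedComponent.sound ⟨p.induce s hp⟩
  have hK : K.ncard + Kᶜ.ncard = Nat.card G.ConnectedComponent := Set.ncard_add_ncard_compl K
  have hKpos : 0 < K.ncard := (Set.ncard_pos).2 (hs.image _)
  calc Nat.card (G.induce s).ConnectedComponent
      = (φ ⁻¹' K).ncard + (φ ⁻¹' K)ᶜ.ncard := (Set.ncard_add_ncard_compl _).symm
    _ ≤ W.ncard + Kᶜ.ncard :=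
        add_le_add ((Set.ncard_le_ncard hA).trans (Set.ncard_image_le W.toFinite))
          (Set.ncard_le_ncard_of_injOn φ (fun _ hC => hC) hB)
    _ < Nat.card G.ConnectedComponent + W.ncard := by omega

theorem ncard_lt_ncard_neighborSet [Finite V] {W : Set s} {x b : V}
    (hW : ∀ w ∈ W, G.Adj x w) (hb : G.Adj x b) (hWb : ∀ w ∈ W, (w : V) ≠ b) :
    W.ncard < (G.neighborSet x).ncard := by
  rw [← Set.ncard_image_of_injective W Subtype.val_injective]
  refine Set.ncard_lt_ncard ⟨?_, fun h => ?_⟩ (Set.toFinite _)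
  · rintro _ ⟨w, hw, rfl⟩
    exact hW w hw
  · obtain ⟨w, hw, rfl⟩ := h hb
    exact hWb w hw rfl

theorem ncard_edgeSet_induce_add_ncard_neighborSet_le [Finite V] {x : V} (hx : x ∉ s) :
    (G.induce s).edgeSet.ncard + (G.neighborSet x).ncard ≤ G.edgeSet.ncard := by
  have hinc : (G.incidenceSet x).ncard = (G.neighborSet x).ncard := by
    rw [← Nat.card_coe_set_eq, ← Nat.card_coe_set_eq]
    exact Nat.card_congr (G.incidenceSetEquivNeighborSet x)
  have hdisj : Disjoint (Sym2.map Subtype.val '' (G.induce s).edgeSet) (G.incidenceSet x) := by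
    rw [Set.disjoint_left]
    rintro _ ⟨e, -, rfl⟩ ⟨-, hxe⟩
    obtain ⟨y, -, rfl⟩ := Sym2.mem_map.1 hxe
    exact hx y.2
  have hsub : Sym2.map Subtype.val '' (G.induce s).edgeSet ∪ G.incidenceSet x ⊆ G.edgeSet :=
    Set.union_subset (Set.image_subset_iff.2 fun _ => (Embedding.induce s).toHom.map_mem_edgeSet)
      (G.incidenceSet_subset x)
  rw [← hinc, ← Set.ncard_image_of_injective _ (Sym2.map.injective Subtype.val_injective),
    ← Set.ncard_union_eq hdisj]
  exact Set.ncard_le_ncard hsub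

theorem IsIndepSet.image_val {t : Set s} (ht : (G.induce s).IsIndepSet t) :
    G.IsIndepSet (Subtype.val '' t) := by
  rintro _ ⟨a, ha, rfl⟩ _ ⟨b, hb, rfl⟩ hab
  exact ht ha hb (fun h => hab (congrArg _ h))

variable (s) in
theorem indepNum_induce_le [Finite V] : (G.induce s).indepNum ≤ G.indepNum := by
  obtain ⟨t, ht, hcard⟩ := (G.induce s).exists_isNIndepSet_indepNum
  rw [← hcard, ← t.card_map (Function.Embedding.subtype _)]
  exact IsIndepSet.card_le_indepNum (by simpa using ht.image_val)

theorem indepNum_induce_add_one_le [Finite V] {v : V} (hv : v ∉ s)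
    (hvs : ∀ w ∈ s, ¬ G.Adj v w) : (G.induce s).indepNum + 1 ≤ G.indepNum := by
  obtain ⟨t, ht, hcard⟩ := (G.induce s).exists_isNIndepSet_indepNum
  have hvt : v ∉ t.map (Function.Embedding.subtype _) := by
    simp only [Finset.mem_map, Function.Embedding.coe_subtype]
    rintro ⟨w, -, rfl⟩
    exact hv w.2
  rw [← hcard, ← t.card_map (Function.Embedding.subtype _), ← Finset.card_cons hvt]
  refine IsIndepSet.card_le_indepNum ?_
  rw [Finset.coe_cons, Finset.coe_map, IsIndepSet, Set.pairwise_insert]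
  exact ⟨ht.image_val, fun _ ⟨w, _, hw⟩ _ => hw ▸ ⟨hvs w w.2, fun h => hvs w w.2 h.symm⟩⟩

theorem exists_adj_adj_walk_notMem_support [Fintype V] [Nonempty V]
    (h : ∀ x, ∃ a b, a ≠ b ∧ G.Adj x a ∧ G.Adj x b) :
    ∃ y a b, a ≠ b ∧ G.Adj y a ∧ G.Adj y b ∧ ∃ p : G.Walk a b, y ∉ p.support := by
  let P n := ∃ (y x : V) (p : G.Walk y x), p.IsPath ∧ p.length = n
  have hP0 : P 0 := ⟨Classical.arbitrary V, _, .nil, .nil, rfl⟩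
  obtain ⟨y, x, p, hp, hlen⟩ :=
    Nat.findGreatest_spec (m := 0) (n := Fintype.card V) (Nat.zero_le _) hP0
  -- `p` is a longest path, so it cannot be extended at `y`.
  have hnbr : ∀ w, G.Adj y w → w ∈ p.support := fun w hw => by
    by_contra hwp
    have hp' : (Walk.cons hw.symm p).IsPath := hp.cons hwp
    have := Nat.le_findGreatest (P := P) hp'.length_lt.le ⟨w, x, _, hp', rfl⟩
    simp only [Walk.length_cons, hlen] at this
    omega
  obtain ⟨a, b, hab, hya, hyb⟩ := h y
  cases p with
  | nil => exact absurd (by simpa using hnbr a hya) hya.ne'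
  | @cons _ z _ hyz q =>
    obtain ⟨hq, hyq⟩ := Walk.cons_isPath_iff _ _ |>.1 hp
    obtain ⟨c, hcz, hyc⟩ : ∃ c, c ≠ z ∧ G.Adj y c := by
      by_cases haz : a = z
      · exact ⟨b, haz ▸ hab.symm, hyb⟩
      · exact ⟨a, haz, hya⟩
    have hcq : c ∈ q.support := by
      simpa [hyc.ne'] using hnbr c hyc
    exact ⟨y, z, c, hcz.symm, hyz, hyc, q.takeUntil c hcq,
      fun hy => hyq (q.support_takeUntil_subset_support hcq hy)⟩

end SimpleGraph

namespace Matrix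

variable {m n K : Type*} [Field K]

theorem rank_submatrix_row_ne_add_one_le [Fintype m] [Fintype n] (A : Matrix m n K) {i : m}
    {j : n} (hij : A i j ≠ 0) (hj : ∀ k ≠ i, A k j = 0) :
    (A.submatrix (Subtype.val : {k // k ≠ i} → m) id).rank + 1 ≤ A.rank := by
  rw [rank_eq_finrank_span_row, rank_eq_finrank_span_row, Nat.add_one_le_iff]
  refine Submodule.finrank_lt_finrank_of_lt (lt_of_le_of_ne ?_ fun h => ?_)
  · exact Submodule.span_mono (Set.range_subset_iff.2 fun k => ⟨k, rfl⟩)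
  · have hle : Submodule.span K (Set.range (A.submatrix (Subtype.val : {k // k ≠ i} → m) id).row) ≤
        LinearMap.ker (LinearMap.proj j) :=
      Submodule.span_le.2 (Set.range_subset_iff.2 fun k => hj k k.2)
    exact hij (hle (h ▸ Submodule.subset_span ⟨i, rfl⟩))

theorem rank_submatrix_col_ne_add_one_le [Fintype m] [Fintype n] (A : Matrix m n K) {i : m}
    {j : n} (hij : A i j ≠ 0) (hi : ∀ k ≠ j, A i k = 0) :
    (A.submatrix id (Subtype.val : {k // k ≠ j} → n)).rank + 1 ≤ A.rank := by
  have := Aᵀ.rank_submatrix_row_ne_add_one_le (i := j) (j := i) hij hi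
  rwa [← transpose_submatrix A id (Subtype.val : {k // k ≠ j} → n), rank_transpose,
    rank_transpose] at this

theorem rank_submatrix_add_two_le [Fintype m] (A : Matrix m m K) {u v : m} (huv : u ≠ v)
    (hAuv : A u v ≠ 0) (hAvu : A v u ≠ 0) (hrow : ∀ k ≠ u, A v k = 0)
    (hcol : ∀ k ≠ u, A k v = 0) {s : Set m} [Fintype s] (hu : u ∉ s) :
    (A.submatrix (Subtype.val : s → m) Subtype.val : Matrix s s K).rank + 2 ≤ A.rank := by
  let A₁ := A.submatrix (Subtype.val : {k // k ≠ u} → m) id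
  let A₂ := A₁.submatrix id (Subtype.val : {k // k ≠ u} → m)
  let ι : s → {k // k ≠ u} := fun w => ⟨w, fun h => hu (h ▸ w.2)⟩
  have h₁ : A₁.rank + 1 ≤ A.rank := A.rank_submatrix_row_ne_add_one_le hAuv hcol
  have h₂ : A₂.rank + 1 ≤ A₁.rank :=
    A₁.rank_submatrix_col_ne_add_one_le (i := ⟨v, huv.symm⟩) hAvu hrow
  have h₃ : (A₂.submatrix ι ι).rank ≤ A₂.rank := A₂.rank_submatrix_le ι ι
  change (A₂.submatrix ι ι).rank + 2 ≤ A.rank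
  omega

end Matrix

namespace SignedGraph

variable {V : Type*} {G : SimpleGraph V} {σ : Sym2 V → ℝ} {s : Set V}

theorem σres_ne_zero (hσ : ∀ e ∈ G.edgeSet, σ e ≠ 0) :
    ∀ e ∈ (G.induce s).edgeSet, σres σ s e ≠ 0 :=
  fun _ he => hσ _ ((Embedding.induce s).toHom.map_mem_edgeSet he)

variable [Fintype V]

variable (G σ s) in
theorem sAdj_induce [Fintype s] :
    sAdj (G.induce s) (σres σ s) = (sAdj G σ).submatrix Subtype.val Subtype.val := by
  ext i j
  simp only [sAdj, σres, Matrix.submatrix_apply, induce_adj, Sym2.map_mk]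

variable (G σ s) in
theorem srank_induce_le [Fintype s] : srank (G.induce s) (σres σ s) ≤ srank G σ := by
  rw [srank, srank, sAdj_induce]
  exact Matrix.rank_submatrix_le _ _ _

theorem srank_induce_add_two_le [Fintype s] (hσ : ∀ e ∈ G.edgeSet, σ e ≠ 0) {u v : V}
    (huv : G.Adj u v) (hv : ∀ w, G.Adj v w → w = u) (hu : u ∉ s) :
    srank (G.induce s) (σres σ s) + 2 ≤ srank G σ := by
  have hvw : ∀ w ≠ u, ¬ G.Adj v w := fun w hw h => hw (hv w h)
  rw [srank, srank, sAdj_induce]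
  refine Matrix.rank_submatrix_add_two_le _ huv.ne ?_ ?_ (fun w hw => ?_) (fun w hw => ?_) hu
  · simpa [sAdj, huv] using hσ _ huv
  · simpa [sAdj, huv.symm] using hσ _ huv.symm
  · simp [sAdj, hvw w hw]
  · simp [sAdj, G.adj_comm w v, hvw w hw]

def potential (G : SimpleGraph V) (σ : Sym2 V → ℝ) : ℕ :=
  srank G σ + 2 * G.indepNum + 2 * (G.edgeSet.ncard + Nat.card G.ConnectedComponent)

theorem potential_induce_add_four_le_of_isolated [Fintype s] {v : V}
    (hs : sᶜ = {v}) (hv : ∀ w, ¬ G.Adj v w) :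
    potential (G.induce s) (σres σ s) + 4 ≤ potential G σ := by
  have hvs : v ∉ s := by simp [← Set.mem_compl_iff, hs]
  have hr := srank_induce_le G σ s
  have hα := indepNum_induce_add_one_le hvs fun w _ => hv w
  have hE := ncard_edgeSet_induce_add_ncard_neighborSet_le (G := G) hvs
  have hω := card_connectedComponent_induce_lt (G := G) (s := s) ⟨v, by simp [hs]⟩ ∅
    fun w x hx hwx => by
      obtain rfl : x = v := by simpa [hs] using Set.mem_compl hx
      exact absurd hwx.symm (hv w)
  rw [Set.ncard_empty] at hω
  unfold potential
  omega

theorem potential_induce_add_eight_le_of_pendant [Fintype s]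
    (hσ : ∀ e ∈ G.edgeSet, σ e ≠ 0) {u v : V} (hs : sᶜ = {u, v}) (huv : G.Adj u v)
    (hv : ∀ w, G.Adj v w → w = u) :
    potential (G.induce s) (σres σ s) + 8 ≤ potential G σ := by
  have hus : u ∉ s := by simp [← Set.mem_compl_iff, hs]
  have hvs : v ∉ s := by simp [← Set.mem_compl_iff, hs]
  have hr := srank_induce_add_two_le hσ huv hv hus
  have hα := indepNum_induce_add_one_le hvs fun w hw h => hus (hv w h ▸ hw)
  have hE := ncard_edgeSet_induce_add_ncard_neighborSet_le (G := G) hus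
  have hW := ncard_lt_ncard_neighborSet (W := {w : s | G.Adj u w})
    (fun _ hw => hw) huv fun w _ h => hvs (h ▸ w.2)
  have hω := card_connectedComponent_induce_lt (G := G) ⟨u, by simp [hs]⟩
    {w : s | G.Adj u w} fun w x hx hwx => by
      rcases (by simpa [hs] using Set.mem_compl hx : x = u ∨ x = v) with rfl | rfl
      · exact ⟨w, hwx.symm, Reachable.refl _⟩
      · exact absurd (hv w hwx.symm ▸ w.2) hus
  unfold potential
  omega

theorem potential_induce_add_four_le_of_walk [Fintype s] {y a b : V}
    (hs : sᶜ = {y}) (hab : a ≠ b) (hya : G.Adj y a) (hyb : G.Adj y b) (p : G.Walk a b)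
    (hp : y ∉ p.support) :
    potential (G.induce s) (σres σ s) + 4 ≤ potential G σ := by
  have hys : y ∉ s := by simp [← Set.mem_compl_iff, hs]
  have hps : ∀ x ∈ p.support, x ∈ s := fun x hx => by
    by_contra hxs
    obtain rfl : x = y := by simpa [hs] using Set.mem_compl hxs
    exact hp hx
  have hr := srank_induce_le G σ s
  have hα := indepNum_induce_le (G := G) s
  have hE := ncard_edgeSet_induce_add_ncard_neighborSet_le (G := G) hys
  have hW := ncard_lt_ncard_neighborSet (W := {w : s | G.Adj y w ∧ (w : V) ≠ b})
    (fun _ hw => hw.1) hyb fun _ hw => hw.2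
  have hω := card_connectedComponent_induce_lt (G := G) ⟨y, by simp [hs]⟩
    {w : s | G.Adj y w ∧ (w : V) ≠ b} fun w x hx hwx => by
      obtain rfl : x = y := by simpa [hs] using Set.mem_compl hx
      by_cases hwb : (w : V) = b
      · obtain rfl : w = ⟨b, hps b p.end_mem_support⟩ := Subtype.ext hwb
        exact ⟨⟨a, hps a p.start_mem_support⟩, ⟨hya, hab⟩,
          ⟨(p.induce s hps).reverse⟩⟩
      · exact ⟨w, ⟨hwx.symm, hwb⟩, Reachable.refl _⟩
  unfold potential
  omega

theorem exists_potential_induce_add_le [Nonempty V] (hσ : ∀ e ∈ G.edgeSet, σ e ≠ 0) :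
    ∃ s : Set V, sᶜ.Nonempty ∧
      potential (G.induce s) (σres σ s) + 4 * sᶜ.ncard ≤ potential G σ := by
  by_cases hiso : ∃ v, ∀ w, ¬ G.Adj v w
  · obtain ⟨v, hv⟩ := hiso
    refine ⟨{v}ᶜ, by simp, ?_⟩
    rw [compl_compl, Set.ncard_singleton]
    -- `convert` identifies the two `Fintype` instances on `{v}ᶜ`.
    convert potential_induce_add_four_le_of_isolated (compl_compl _) hv
  by_cases hpend : ∃ u v, G.Adj u v ∧ ∀ w, G.Adj v w → w = u
  · obtain ⟨u, v, huv, hv⟩ := hpend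
    refine ⟨{u, v}ᶜ, by simp, ?_⟩
    rw [compl_compl, Set.ncard_pair huv.ne]
    convert potential_induce_add_eight_le_of_pendant hσ (compl_compl _) huv hv
  push Not at hiso hpend
  obtain ⟨y, a, b, hab, hya, hyb, p, hp⟩ := exists_adj_adj_walk_notMem_support fun x => by
    obtain ⟨a, ha⟩ := hiso x
    obtain ⟨b, hb, hba⟩ := hpend a x ha.symm
    exact ⟨b, a, hba, hb, ha⟩
  refine ⟨{y}ᶜ, by simp, ?_⟩
  rw [compl_compl, Set.ncard_singleton]
  convert potential_induce_add_four_le_of_walk (compl_compl _) hab hya hyb p hp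

theorem four_mul_card_le_potential (hσ : ∀ e ∈ G.edgeSet, σ e ≠ 0) :
    4 * Fintype.card V ≤ potential G σ := by
  induction h : Fintype.card V using Nat.strong_induction_on generalizing V with
  | _ n ih =>
  rcases isEmpty_or_nonempty V with hV | hV
  · simp [← h]
  obtain ⟨s, hs, hle⟩ := exists_potential_induce_add_le hσ
  have hcard : Fintype.card s + sᶜ.ncard = n := by
    rw [← Nat.card_eq_fintype_card, Nat.card_coe_set_eq, Set.ncard_add_ncard_compl,
      Nat.card_eq_fintype_card, h]
  have hs' := (Set.ncard_pos).2 hs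
  have := ih (Fintype.card s) (by omega) (V := s) (σres_ne_zero hσ) rfl
  omega

end SignedGraph

theorem two_card_sub_cyclomatic_le {V : Type*} [Fintype V] (G : SimpleGraph V)
    (σ : Sym2 V → ℝ) (hσ : ∀ e ∈ G.edgeSet, σ e = 1 ∨ σ e = -1) :
    2 * Fintype.card V - 2 * cyclomatic G ≤ srank G σ + 2 * _root_.indepNum G := by
  have hσ₀ : ∀ e ∈ G.edgeSet, σ e ≠ 0 := fun e he => by
    rcases hσ e he with h | h <;> simp [h]
  have h := SignedGraph.four_mul_card_le_potential hσ₀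
  unfold SignedGraph.potential at h
  rw [indepNum_eq_simpleGraph_indepNum, cyclomatic]
  omega
end
end

section
/- Let M be a real symmetric n×n matrix and let I be a set of indices such that M_{ij} = 0 for all i,j ∈ I. Then rank(M) ≤ 2(n − |I|). -/
lemma matrix_rank_add_le {n : Type*} [Fintype n] [DecidableEq n]
    (A B : Matrix n n ℝ) : (A + B).rank ≤ A.rank + B.rank := by
  simp only [Matrix.rank]
  have h : LinearMap.range (A + B).mulVecLin ≤
      LinearMap.range A.mulVecLin ⊔ LinearMap.range B.mulVecLin := by
    rintro x ⟨v, rfl⟩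
    exact Submodule.mem_sup.2 ⟨A.mulVecLin v, ⟨v, rfl⟩, B.mulVecLin v, ⟨v, rfl⟩, by
      simp [Matrix.mulVecLin, Matrix.add_mulVec]⟩
  exact (Submodule.finrank_mono h).trans
    (Submodule.finrank_add_le_finrank_add_finrank _ _)

theorem rank_le_of_zero_principal_submatrix {n : Type*} [Fintype n] [DecidableEq n]
    (M : Matrix n n ℝ) (hM : M.IsSymm) (I : Finset n)
    (hI : ∀ i ∈ I, ∀ j ∈ I, M i j = 0) :
    M.rank ≤ 2 * (Fintype.card n - I.card) := by
  classical
  set d : n → ℝ := fun i => if i ∈ I then 0 else 1 with hd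
  set A : Matrix n n ℝ := Matrix.diagonal d * M with hA
  set B : Matrix n n ℝ := M - A with hB
  have hMAB : M = A + B := by simp [hB]
  have hBd : B = B * Matrix.diagonal d := by
    ext i j
    rw [Matrix.mul_diagonal]
    by_cases hj : j ∈ I
    · by_cases hi : i ∈ I
      · simp [hB, hA, Matrix.sub_apply, Matrix.diagonal_mul, hd, hi, hj, hI i hi j hj]
      · simp [hB, hA, Matrix.sub_apply, Matrix.diagonal_mul, hd, hi, hj]
    · simp [hd, hj]
  have hdrank : (Matrix.diagonal d).rank = Fintype.card n - I.card := by
    rw [Matrix.rank_diagonal]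
    have : ∀ i, d i ≠ 0 ↔ i ∉ I := by
      intro i; by_cases hi : i ∈ I <;> simp [hd, hi]
    rw [Fintype.card_subtype]
    simp only [this]
    rw [Finset.filter_not, Finset.card_sdiff_of_subset (Finset.filter_subset _ _)]
    simp [Finset.filter_mem_eq_inter]
  have hAr : A.rank ≤ Fintype.card n - I.card := by
    rw [← hdrank]; exact Matrix.rank_mul_le_left _ _
  have hBr : B.rank ≤ Fintype.card n - I.card := by
    rw [← hdrank, hBd]; exact Matrix.rank_mul_le_right _ _
  calc M.rank = (A + B).rank := by rw [← hMAB]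
    _ ≤ A.rank + B.rank := matrix_rank_add_le A B
    _ ≤ (Fintype.card n - I.card) + (Fintype.card n - I.card) := add_le_add hAr hBr
    _ = 2 * (Fintype.card n - I.card) := (two_mul _).symm
end

section
/- For any signed forest (T,σ) (the underlying graph T is acyclic), the rank of the signed adjacency matrix equals the rank of the unsigned adjacency matrix of T, and both equal 2m(T), twice the matching number of T. -/
open SimpleGraph
open scoped Classical

noncomputable section

/-!
A forest with an edge has a pendant vertex `u`, adjacent only to `v`. Deleting `u` and `v`
lowers the matching number by exactly one (a matching meets `{u, v}` only in its edge at `v`),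
and lowers the rank of any adjacency matrix whose weights are nonzero on the edges by exactly
two: with respect to the splitting `{u, v} ⊔ rest` the block on `{u, v}` is
`!![0, σ(uv); σ(uv), 0]`, which is invertible, and its Schur complement is the block on the
rest, because row and column `u` vanish outside `v`. Induction on the number of vertices gives
`rank = 2 m(T)` for every such weighting, in particular for `σ` and for the all-ones weighting.
-/

namespace Submodule

variable {K M N : Type*} [Field K] [AddCommGroup M] [Module K M] [AddCommGroup N] [Module K N]
  [FiniteDimensional K M] [FiniteDimensional K N]

theorem finrank_prod (p : Submodule K M) (q : Submodule K N) :
    Module.finrank K (p.prod q) = Module.finrank K p + Module.finrank K q := by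
  have h : LinearMap.range (p.subtype.prodMap q.subtype) = p.prod q := by
    rw [LinearMap.range_prodMap, range_subtype, range_subtype]
  rw [← h, LinearMap.finrank_range_of_inj (p.injective_subtype.prodMap q.injective_subtype),
    Module.finrank_prod]

end Submodule

def Equiv.finTwoSumComplPair {n : Type*} {u v : n} (huv : u ≠ v) :
    Fin 2 ⊕ ↥({u, v}ᶜ : Set n) ≃ n :=
  Equiv.ofBijective (Sum.elim ![u, v] Subtype.val) <| by
    refine ⟨?_, fun x => ?_⟩
    · rintro (i | ⟨x, hx⟩) (j | ⟨y, hy⟩) h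
      · fin_cases i <;> fin_cases j <;> simp_all [eq_comm]
      · exact hy (by rw [← show ![u, v] i = y from h]; fin_cases i <;> simp) |>.elim
      · exact hx (by rw [show x = ![u, v] j from h]; fin_cases j <;> simp) |>.elim
      · simp_all
    · by_cases hx : x ∈ ({u, v} : Set n)
      · rcases hx with rfl | rfl
        exacts [⟨.inl 0, rfl⟩, ⟨.inl 1, rfl⟩]
      · exact ⟨.inr ⟨x, hx⟩, rfl⟩

namespace Matrix

variable {K l m : Type*} [Field K] [Fintype l] [Fintype m]

theorem rank_fromBlocks_zero_zero (A : Matrix l l K) (D : Matrix m m K) :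
    (fromBlocks A 0 0 D).rank = A.rank + D.rank := by
  let e := LinearEquiv.sumArrowLequivProdArrow l m K K
  have h : (fromBlocks A 0 0 D).mulVecLin =
      e.symm.toLinearMap ∘ₗ (A.mulVecLin.prodMap D.mulVecLin) ∘ₗ e.toLinearMap := by
    refine LinearMap.ext fun x => funext fun i => ?_
    rcases i with i | i <;>
      simp [e, fromBlocks_mulVec, LinearEquiv.sumArrowLequivProdArrow, Equiv.sumArrowEquivProdArrow]
  rw [rank, h, LinearMap.range_comp, LinearMap.range_comp, LinearEquiv.range, Submodule.map_top,
    LinearEquiv.finrank_map_eq, LinearMap.range_prodMap, Submodule.finrank_prod, rank, rank]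

theorem rank_fromBlocks_of_isUnit_det [DecidableEq l] [DecidableEq m] {A : Matrix l l K}
    (B : Matrix l m K) (C : Matrix m l K) (D : Matrix m m K) (hA : IsUnit A.det)
    (h : C * A⁻¹ * B = 0) :
    (fromBlocks A B C D).rank = A.rank + D.rank := by
  let := A.invertibleOfIsUnitDet hA
  rw [fromBlocks_eq_of_invertible₁₁, invOf_eq_nonsing_inv, h, sub_zero,
    rank_mul_eq_left_of_isUnit_det _ _ (by simp),
    rank_mul_eq_right_of_isUnit_det _ _ (by simp),
    rank_fromBlocks_zero_zero]

theorem rank_eq_rank_submatrix_compl_pair_add_two {n : Type*} [Fintype n] [DecidableEq n]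
    (A : Matrix n n K) {u v : n} (huv : u ≠ v) (hrow : ∀ j, j ≠ v → A u j = 0)
    (hcol : ∀ i, i ≠ v → A i u = 0) (hAuv : A u v ≠ 0) (hAvu : A v u ≠ 0) :
    A.rank = (A.submatrix (↑) (↑) : Matrix ↥({u, v}ᶜ : Set n) ↥({u, v}ᶜ : Set n) K).rank + 2 := by
  set e := Equiv.finTwoSumComplPair huv
  have he0 : e (.inl 0) = u := rfl
  have he1 : e (.inl 1) = v := rfl
  have he : ∀ w, e (.inr w) = w := fun _ => rfl
  have hX : IsUnit (A.submatrix e e).toBlocks₁₁.det := by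
    simp [det_fin_two, toBlocks₁₁, he0, he1, hrow u huv, hAuv, hAvu]
  rw [← rank_submatrix A e e, ← fromBlocks_toBlocks (A.submatrix e e),
    rank_fromBlocks_of_isUnit_det _ _ _ hX, rank_of_isUnit _ ((isUnit_iff_isUnit_det _).2 hX),
    Fintype.card_fin, add_comm]
  · rfl
  · -- the adjugate of `!![0, A u v; A v u, A v v]` vanishes at `(1, 1)`, and the off-diagonal
    -- blocks vanish in the row and column of `u`
    ext w w'
    have hw : (w : n) ≠ v := fun h => w.2 (by simp [h])
    have hw' : (w' : n) ≠ v := fun h => w'.2 (by simp [h])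
    simp [mul_apply, Fin.sum_univ_two, inv_def, adjugate_fin_two, toBlocks₁₁, toBlocks₁₂,
      toBlocks₂₁, he0, he1, he, hrow u huv, hcol _ hw, hrow _ hw']

end Matrix

namespace SimpleGraph

variable {V : Type*} {G : SimpleGraph V}

theorem IsAcyclic.exists_neighborSet_eq_singleton [Finite V] (hG : G.IsAcyclic) {a b : V}
    (hab : G.Adj a b) : ∃ u v, G.neighborSet u = {v} := by
  have : Nonempty V := ⟨a⟩
  obtain ⟨u, v, p, hp, hmax⟩ := Walk.exists_isPath_forall_isPath_length_le_length G
  have hnil : ¬p.Nil := fun h => by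
    have := hmax a b (Walk.cons hab .nil) (by simp [hab.ne])
    simp [Walk.length_eq_zero_iff.mpr h] at this
  refine ⟨u, p.snd, Set.eq_singleton_iff_unique_mem.2 ⟨p.adj_snd hnil, fun w hw => ?_⟩⟩
  refine hG.eq_snd_of_adj_start hp hw (by_contra fun hw' => ?_)
  have := hmax _ _ (p.cons (G.adj_symm hw)) (hp.cons hw')
  simp at this

namespace Subgraph

theorem isMatching_bot : (⊥ : G.Subgraph).IsMatching := fun _ h => h.elim

theorem IsMatching.subsingleton_incidenceSet {M : G.Subgraph} (hM : M.IsMatching) (x : V) :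
    (M.incidenceSet x).Subsingleton := by
  rintro _ ⟨he, hxe⟩ _ ⟨he', hxe'⟩
  obtain ⟨y, rfl⟩ := Sym2.mem_iff_exists.1 hxe
  obtain ⟨y', rfl⟩ := Sym2.mem_iff_exists.1 hxe'
  rw [hM.eq_of_adj_left (M.mem_edgeSet.1 he) (M.mem_edgeSet.1 he')]

theorem IsMatching.deleteVerts_insert_neighborSet {M : G.Subgraph} (hM : M.IsMatching) (x : V) :
    (M.deleteVerts (insert x (M.neighborSet x))).IsMatching := by
  rintro a ⟨ha, haD⟩
  obtain ⟨b, hab, hb⟩ := hM ha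
  have hbD : b ∉ insert x (M.neighborSet x) := by
    rintro (rfl | hxb)
    exacts [haD (Or.inr hab.symm), haD (Or.inl (hM.eq_of_adj_right hab hxb))]
  exact ⟨b, deleteVerts_adj.2 ⟨ha, haD, M.edge_vert hab.symm, hbD, hab⟩,
    fun c hc => hb c (deleteVerts_adj.1 hc).2.2.2.2⟩

theorem IsMatching.ncard_edgeSet_le_deleteVerts_insert_neighborSet [Finite V] {M : G.Subgraph}
    (hM : M.IsMatching) (x : V) :
    M.edgeSet.ncard ≤ (M.deleteVerts (insert x (M.neighborSet x))).edgeSet.ncard + 1 := by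
  have hkeep : ∀ {c d}, M.Adj c d → x ≠ c → x ≠ d → c ∉ insert x (M.neighborSet x) := by
    rintro c d hcd hc hd (rfl | hxc)
    exacts [hc rfl, hd (hM.eq_of_adj_left hxc.symm hcd)]
  have hsub : M.edgeSet ⊆ (M.deleteVerts (insert x (M.neighborSet x))).edgeSet ∪
      M.incidenceSet x := by
    intro e he
    induction e using Sym2.ind with | _ a b => ?_
    have hab : M.Adj a b := he
    by_cases hx : x ∈ s(a, b)
    · exact Or.inr ⟨he, hx⟩
    · rw [Sym2.mem_iff, not_or] at hx
      exact Or.inl (deleteVerts_adj.2 ⟨M.edge_vert hab, hkeep hab hx.1 hx.2,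
        M.edge_vert hab.symm, hkeep hab.symm hx.2 hx.1, hab⟩)
  calc M.edgeSet.ncard ≤ _ := Set.ncard_le_ncard hsub
    _ ≤ _ + (M.incidenceSet x).ncard := Set.ncard_union_le _ _
    _ ≤ _ + 1 := by
      gcongr
      exact Set.ncard_le_one_iff_subsingleton.2 (hM.subsingleton_incidenceSet x)

end Subgraph

theorem matchNum_bot : matchNum (⊥ : SimpleGraph V) = 0 := by
  refine Nat.eq_zero_of_le_zero (csSup_le' ?_)
  rintro _ ⟨M, -, rfl⟩
  simp [Set.subset_empty_iff.1 (edgeSet_bot (V := V) ▸ M.edgeSet_subset)]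

section Finite

variable [Finite V]

theorem bddAbove_matchNum_set :
    BddAbove {n | ∃ M : G.Subgraph, M.IsMatching ∧ M.edgeSet.ncard = n} :=
  ⟨Nat.card (Sym2 V), by rintro _ ⟨M, -, rfl⟩; exact Set.ncard_le_card _⟩

theorem Subgraph.IsMatching.ncard_edgeSet_le_matchNum {M : G.Subgraph} (hM : M.IsMatching) :
    M.edgeSet.ncard ≤ matchNum G :=
  le_csSup bddAbove_matchNum_set ⟨M, hM, rfl⟩

theorem exists_isMatching_ncard_edgeSet_eq_matchNum :
    ∃ M : G.Subgraph, M.IsMatching ∧ M.edgeSet.ncard = matchNum G := by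
  refine Nat.sSup_mem ?_ bddAbove_matchNum_set
  exact ⟨0, ⊥, Subgraph.isMatching_bot, by simp⟩

theorem Subgraph.IsMatching.ncard_edgeSet_le_matchNum_induce {s : Set V} {M : G.Subgraph}
    (hM : M.IsMatching) (hs : M.verts ⊆ s) : M.edgeSet.ncard ≤ matchNum (G.induce s) := by
  let M' := M.comap (Embedding.induce s).toHom
  have hM' : M'.IsMatching := by
    intro a ha
    obtain ⟨b, hab, hb⟩ := hM ha
    exact ⟨⟨b, hs (M.edge_vert hab.symm)⟩, ⟨M.adj_sub hab, hab⟩,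
      fun c hc => Subtype.ext (hb _ hc.2)⟩
  have hsub : M.edgeSet ⊆ Sym2.map (↑) '' M'.edgeSet := by
    intro e he
    induction e using Sym2.ind with | _ a b => ?_
    have hab : M.Adj a b := he
    exact ⟨s(⟨a, hs (M.edge_vert hab)⟩, ⟨b, hs (M.edge_vert hab.symm)⟩),
      ⟨M.adj_sub hab, hab⟩, rfl⟩
  calc M.edgeSet.ncard ≤ (Sym2.map (↑) '' M'.edgeSet).ncard := Set.ncard_le_ncard hsub
    _ ≤ M'.edgeSet.ncard := Set.ncard_image_le
    _ ≤ matchNum (G.induce s) := hM'.ncard_edgeSet_le_matchNum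

theorem matchNum_vdel_add_one_le {u v : V} (huv : G.Adj u v) :
    matchNum (vdel G {u, v}) + 1 ≤ matchNum G := by
  show matchNum (G.induce {u, v}ᶜ) + 1 ≤ matchNum G
  obtain ⟨M', hM', hcard⟩ := exists_isMatching_ncard_edgeSet_eq_matchNum (G := G.induce {u, v}ᶜ)
  let f := (Embedding.induce ({u, v}ᶜ : Set V) (G := G)).toHom
  have hf : ∀ a, f a = a := fun _ => rfl
  have hf_inj : Function.Injective f := Subtype.val_injective
  have hdisj : Disjoint (M'.map f).support (G.subgraphOfAdj huv).support := by
    refine Set.disjoint_left.2 fun x hx hx' => ?_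
    obtain ⟨a, -, rfl⟩ := Subgraph.support_subset_verts _ hx
    exact a.2 (by simpa [hf] using Subgraph.support_subset_verts _ hx')
  have huv_notMem : s(u, v) ∉ (M'.map f).edgeSet := by
    rintro ⟨a, b, -, ha, -⟩
    exact a.2 (by simp [← show (a : V) = u from ha])
  have hM := (hM'.map f hf_inj).sup (.subgraphOfAdj huv) hdisj
  calc matchNum (G.induce {u, v}ᶜ) + 1
      = (M'.map f ⊔ G.subgraphOfAdj huv).edgeSet.ncard := by
        rw [Subgraph.edgeSet_sup, edgeSet_subgraphOfAdj, Set.union_singleton,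
          Set.ncard_insert_of_notMem huv_notMem, Subgraph.edgeSet_map,
          Set.ncard_image_of_injective _ (Sym2.map.injective hf_inj),
          hcard]
    _ ≤ matchNum G := hM.ncard_edgeSet_le_matchNum

theorem matchNum_le_matchNum_vdel_add_one {u v : V} (hu : G.neighborSet u = {v}) :
    matchNum G ≤ matchNum (vdel G {u, v}) + 1 := by
  obtain ⟨M, hM, hcard⟩ := exists_isMatching_ncard_edgeSet_eq_matchNum (G := G)
  have hverts : (M.deleteVerts (insert v (M.neighborSet v))).verts ⊆ {u, v}ᶜ := by
    rintro a ⟨ha, haD⟩ (rfl | rfl)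
    · -- `u` can only be matched to `v`
      obtain ⟨b, hab, -⟩ := hM ha
      have hb : b ∈ G.neighborSet a := M.adj_sub hab
      rw [hu, Set.mem_singleton_iff] at hb
      exact haD (Or.inr (hb ▸ hab.symm))
    · exact haD (Or.inl rfl)
  calc matchNum G = M.edgeSet.ncard := hcard.symm
    _ ≤ (M.deleteVerts (insert v (M.neighborSet v))).edgeSet.ncard + 1 :=
      hM.ncard_edgeSet_le_deleteVerts_insert_neighborSet v
    _ ≤ matchNum (vdel G {u, v}) + 1 := by
      gcongr
      exact (hM.deleteVerts_insert_neighborSet v).ncard_edgeSet_le_matchNum_induce hverts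

theorem matchNum_eq_matchNum_vdel_add_one {u v : V} (hu : G.neighborSet u = {v}) :
    matchNum G = matchNum (vdel G {u, v}) + 1 :=
  (matchNum_le_matchNum_vdel_add_one hu).antisymm
    (matchNum_vdel_add_one_le (hu.symm ▸ rfl : v ∈ G.neighborSet u))

end Finite

end SimpleGraph

section Signed

variable {V : Type*} [Fintype V] {G : SimpleGraph V} {σ : Sym2 V → ℝ}

theorem srank_bot : srank (⊥ : SimpleGraph V) σ = 0 := by
  rw [srank, show sAdj ⊥ σ = 0 from Matrix.ext fun _ _ => if_neg id, Matrix.rank_zero]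

theorem srank_eq_srank_vdel_add_two {u v : V} (hu : G.neighborSet u = {v})
    (hσ : σ s(u, v) ≠ 0) : srank G σ = srank (vdel G {u, v}) (σres σ {u, v}ᶜ) + 2 := by
  have hadj : ∀ {w}, G.Adj u w ↔ w = v := by
    intro w
    rw [← mem_neighborSet, hu, Set.mem_singleton_iff]
  have huv : G.Adj u v := hadj.2 rfl
  exact (sAdj G σ).rank_eq_rank_submatrix_compl_pair_add_two huv.ne
    (fun j hj => if_neg (hadj.not.2 hj)) (fun i hi => if_neg fun h => hi (hadj.1 h.symm))
    (by simpa [sAdj, huv]) (by simpa [sAdj, huv.symm, Sym2.eq_swap])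

theorem srank_eq_two_mul_matchNum (hG : G.IsAcyclic) (hσ : ∀ e ∈ G.edgeSet, σ e ≠ 0) :
    srank G σ = 2 * matchNum G := by
  induction hn : Fintype.card V using Nat.strong_induction_on generalizing V with | _ n ih => ?_
  by_cases hbot : G = ⊥
  · subst hbot
    rw [srank_bot, matchNum_bot]
  obtain ⟨a, b, hab⟩ : ∃ a b, G.Adj a b := by simpa [eq_bot_iff_forall_not_adj] using hbot
  obtain ⟨u, v, hu⟩ := hG.exists_neighborSet_eq_singleton hab
  have huv : G.Adj u v := by simp [← mem_neighborSet, hu]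
  have hσ' : ∀ e ∈ (vdel G {u, v}).edgeSet, σres σ {u, v}ᶜ e ≠ 0 := by
    intro e he
    induction e using Sym2.ind with | _ x y => exact hσ s(x, y) he
  have hcard : Fintype.card ↥({u, v}ᶜ : Set V) < n :=
    hn ▸ Fintype.card_subtype_lt (x := u) (by simp)
  rw [srank_eq_srank_vdel_add_two hu (hσ _ huv), matchNum_eq_matchNum_vdel_add_one hu,
    ih _ hcard (G := vdel G {u, v}) (hG.induce _) hσ' rfl]
  ring

end Signed

theorem srank_forest {V : Type*} [Fintype V] (T : SimpleGraph V) (hT : T.IsAcyclic)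
    (σ : Sym2 V → ℝ) (hσ : ∀ e ∈ T.edgeSet, σ e = 1 ∨ σ e = -1) :
    srank T σ = srank T (fun _ => 1) ∧ srank T σ = 2 * matchNum T := by
  have hσ₀ : ∀ e ∈ T.edgeSet, σ e ≠ 0 := fun e he => by rcases hσ e he with h | h <;> simp [h]
  have hsigned := srank_eq_two_mul_matchNum hT hσ₀
  have hunsigned := srank_eq_two_mul_matchNum hT (σ := fun _ => 1) fun _ _ => one_ne_zero
  exact ⟨hsigned.trans hunsigned.symm, hsigned⟩
end
end

section
/- Let (C_n, σ) be a signed cycle on n vertices. Then r(C_n,σ) = n if n is odd, or if n ≡ 0 (mod 4) and σ(C_n) = −1, or if n ≡ 2 (mod 4) and σ(C_n) = +1; and r(C_n,σ) = n − 2 if n ≡ 0 (mod 4) and σ(C_n) = +1, or if n ≡ 2 (mod 4) and σ(C_n) = −1. Here σ(C_n) is the product of the edge signs. -/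
open SimpleGraph
open scoped Classical

noncomputable section

/-!
Put `εₖ = σ(k, k+1)` and read a vector `x` as an `n`-periodic sequence. Row `k + 1` of `A x = 0`
says `εₖ xₖ + εₖ₊₁ xₖ₊₂ = 0`. Switching vertex `k` by the sign `dₖ = ε₀ ⋯ εₖ₋₁` of the path
`0, 1, …, k` turns this into `vₖ₊₂ = -vₖ` for `vₖ = dₖ xₖ`, while periodicity of `x` becomes
`vₖ₊ₙ = σ(Cₙ) vₖ`. So the kernel is isomorphic to the sequences obeying both rules. For odd `n` they
give `vₖ₊₂ₙ = -vₖ` and `vₖ₊₂ₙ = vₖ`, so the kernel is trivial; for `n = 2m` the first rule gives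
`vₖ₊ₙ = (-1)ᵐ vₖ`, so the kernel is trivial if `σ(Cₙ) ≠ (-1)ᵐ` and is the whole two-dimensional
solution space of `vₖ₊₂ = -vₖ` otherwise.
-/

open Finset Function LinearMap Module
open scoped Fin.CommRing Matrix

lemma Matrix.rank_add_finrank_ker_mulVecLin {m n K : Type*} [Fintype n] [Field K]
    (A : Matrix m n K) : A.rank + finrank K (ker A.mulVecLin) = Fintype.card n := by
  rw [Matrix.rank, finrank_range_add_finrank_ker, finrank_fintype_fun_eq_card]

lemma Function.Antiperiodic.add_two_mul_eq {R : Type*} [Ring R] {v : ℕ → R}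
    (hv : Antiperiodic v 2) (k m : ℕ) : v (k + 2 * m) = (-1) ^ m * v k := by
  rw [mul_comm, ← smul_eq_mul m 2, hv.add_nsmul_eq]
  simp

namespace SignedCycle

section PathSign

variable (e : ℕ → ℝ)

def pathSign (k : ℕ) : ℝ := ∏ j ∈ range k, e j

variable {e}

lemma pathSign_succ (k : ℕ) : pathSign e (k + 1) = pathSign e k * e k :=
  prod_range_succ e k

lemma pathSign_mul_self (he : ∀ k, e k * e k = 1) (k : ℕ) :
    pathSign e k * pathSign e k = 1 := by
  rw [pathSign, ← prod_mul_distrib]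
  exact prod_eq_one fun j _ => he j

lemma pathSign_ne_zero (he : ∀ k, e k * e k = 1) (k : ℕ) : pathSign e k ≠ 0 :=
  left_ne_zero_of_mul_eq_one (pathSign_mul_self he k)

lemma pathSign_add_period {n : ℕ} (hper : Periodic e n) (k : ℕ) :
    pathSign e (k + n) = pathSign e k * pathSign e n := by
  induction k with
  | zero => simp [pathSign]
  | succ k ih => rw [Nat.add_right_comm, pathSign_succ, ih, hper, pathSign_succ]; ring

lemma pathSign_switch_identity (he : ∀ k, e k * e k = 1) (u : ℕ → ℝ) (k : ℕ) :
    pathSign e (k + 2) * u (k + 2) + pathSign e k * u k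
      = pathSign e (k + 1) * (e k * u k + e (k + 1) * u (k + 2)) := by
  rw [pathSign_succ, pathSign_succ]
  linear_combination (-(pathSign e k * u k)) * he k

end PathSign

section Switching

variable {e : ℕ → ℝ} {n : ℕ} [NeZero n]

variable (e n) in
def switching : (Fin n → ℝ) →ₗ[ℝ] ℕ → ℝ where
  toFun x k := pathSign e k * x (k : Fin n)
  map_add' x y := by ext k; simp [mul_add]
  map_smul' c x := by ext k; simp [mul_left_comm]

@[simp]
lemma switching_apply (x : Fin n → ℝ) (k : ℕ) :
    switching e n x k = pathSign e k * x (k : Fin n) :=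
  rfl

lemma switching_injective (he : ∀ k, e k * e k = 1) : Injective (switching e n) := by
  intro x y hxy
  ext i
  have := congrFun hxy i.val
  simp only [switching_apply, Fin.cast_val_eq_self] at this
  simpa [← mul_assoc, pathSign_mul_self he] using congrArg (pathSign e i.val * ·) this

lemma mem_range_switching_iff (he : ∀ k, e k * e k = 1) (hper : Periodic e n) (v : ℕ → ℝ) :
    v ∈ range (switching e n) ↔ ∀ k, v (k + n) = pathSign e n * v k := by
  constructor
  · rintro ⟨x, rfl⟩ k
    rw [switching_apply, switching_apply, pathSign_add_period hper, Nat.cast_add, Fin.natCast_self,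
      add_zero]
    ring
  · intro hv
    have hw : Periodic (fun k => pathSign e k * v k) n := fun k => by
      simp only [pathSign_add_period hper, hv]
      linear_combination (pathSign e k * v k) * pathSign_mul_self he n
    refine ⟨fun i => pathSign e i.val * v i.val, funext fun k => ?_⟩
    rw [switching_apply, Fin.val_natCast, hw.map_mod_nat, ← mul_assoc, pathSign_mul_self he,
      one_mul]

def antiperiodicTwo : LinearRecurrence ℝ := ⟨2, ![-1, 0]⟩

lemma antiperiodicTwo_mem_solSpace_iff (v : ℕ → ℝ) :
    v ∈ antiperiodicTwo.solSpace ↔ Antiperiodic v 2 := by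
  simp [← LinearRecurrence.is_sol_iff_mem_solSpace, LinearRecurrence.IsSolution, antiperiodicTwo,
    Fin.sum_univ_two, Antiperiodic]

lemma finrank_antiperiodicTwo_solSpace : finrank ℝ antiperiodicTwo.solSpace = 2 := by
  rw [antiperiodicTwo.toInit.finrank_eq, Module.finrank_fin_fun]
  rfl

lemma range_switching_inf_solSpace_of_odd (he : ∀ k, e k * e k = 1) (hper : Periodic e n)
    (hn : Odd n) : range (switching e n) ⊓ antiperiodicTwo.solSpace = ⊥ := by
  refine eq_bot_iff.2 fun v ⟨hr, hs⟩ => funext fun k => ?_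
  rw [SetLike.mem_coe, mem_range_switching_iff he hper] at hr
  rw [SetLike.mem_coe, antiperiodicTwo_mem_solSpace_iff] at hs
  have hneg : v (k + 2 * n) = -v k := by
    rw [hs.add_two_mul_eq, hn.neg_one_pow, neg_one_mul]
  have hpos : v (k + 2 * n) = v k := by
    rw [two_mul, ← add_assoc, hr, hr]
    linear_combination v k * pathSign_mul_self he n
  simp only [Pi.zero_apply]
  linarith

lemma range_switching_inf_solSpace_of_ne {m : ℕ} (he : ∀ k, e k * e k = 1) (hper : Periodic e n)
    (hm : n = 2 * m) (hP : pathSign e n ≠ (-1) ^ m) :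
    range (switching e n) ⊓ antiperiodicTwo.solSpace = ⊥ := by
  refine eq_bot_iff.2 fun v ⟨hr, hs⟩ => funext fun k => ?_
  rw [SetLike.mem_coe, mem_range_switching_iff he hper] at hr
  rw [SetLike.mem_coe, antiperiodicTwo_mem_solSpace_iff] at hs
  have h : (pathSign e n - (-1) ^ m) * v k = 0 := by
    rw [sub_mul, ← hr, hm, hs.add_two_mul_eq, sub_self]
  exact (mul_eq_zero.1 h).resolve_left (sub_ne_zero.2 hP)

lemma solSpace_le_range_switching {m : ℕ} (he : ∀ k, e k * e k = 1) (hper : Periodic e n)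
    (hm : n = 2 * m) (hP : pathSign e n = (-1) ^ m) :
    antiperiodicTwo.solSpace ≤ range (switching e n) := by
  intro v hs
  rw [antiperiodicTwo_mem_solSpace_iff] at hs
  rw [mem_range_switching_iff he hper]
  intro k
  rw [hP, hm, hs.add_two_mul_eq]

end Switching

section Cycle

variable {n : ℕ} [NeZero n]

lemma cycleGraph_adj_iff (hn : 2 ≤ n) {u v : Fin n} :
    (cycleGraph n).Adj u v ↔ u - v = 1 ∨ v - u = 1 := by
  obtain ⟨m, rfl⟩ := Nat.exists_eq_add_of_le' hn
  exact cycleGraph_adj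

lemma cycleGraph_adj_add_one (hn : 2 ≤ n) (i : Fin n) : (cycleGraph n).Adj i (i + 1) :=
  (cycleGraph_adj_iff hn).2 (Or.inr (add_sub_cancel_left i 1))

lemma two_ne_zero_of_three_le (hn : 3 ≤ n) : (2 : Fin n) ≠ 0 := by
  simp [Fin.ext_iff, Nat.mod_eq_of_lt (by omega : 2 < n)]

lemma sAdj_cycleGraph_mulVec_add_one (hn : 3 ≤ n) (σ : Sym2 (Fin n) → ℝ) (x : Fin n → ℝ)
    (i : Fin n) :
    (sAdj (cycleGraph n) σ *ᵥ x) (i + 1) =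
      σ s(i, i + 1) * x i + σ s(i + 1, i + 2) * x (i + 2) := by
  have hadj : ∀ j, (cycleGraph n).Adj (i + 1) j ↔ j = i ∨ j = i + 2 := fun j => by
    rw [cycleGraph_adj_iff (by omega)]
    constructor
    · rintro (h | h)
      · left; linear_combination -h
      · right; linear_combination h
    · rintro (rfl | rfl)
      · left; ring
      · right; ring
  have hne : i ≠ i + 2 := fun h => two_ne_zero_of_three_le hn (by linear_combination -h)
  rw [Matrix.mulVec, dotProduct, Fintype.sum_eq_add i (i + 2) hne fun j hj => by
    simp [sAdj, hadj, hj.1, hj.2]]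
  simp only [sAdj, hadj, true_or, or_true, if_true, Sym2.eq_swap]

def cycleSign (σ : Sym2 (Fin n) → ℝ) (k : ℕ) : ℝ := σ s((k : Fin n), (k : Fin n) + 1)

lemma cycleSign_periodic (σ : Sym2 (Fin n) → ℝ) : Periodic (cycleSign σ) n := fun k => by
  simp [cycleSign]

lemma cycleSign_mul_self (hn : 2 ≤ n) {σ : Sym2 (Fin n) → ℝ}
    (hσ : ∀ e ∈ (cycleGraph n).edgeSet, σ e = 1 ∨ σ e = -1) (k : ℕ) :
    cycleSign σ k * cycleSign σ k = 1 := by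
  rcases hσ s((k : Fin n), (k : Fin n) + 1) (cycleGraph_adj_add_one hn _) with h | h <;>
    simp [cycleSign, h]

lemma mem_ker_sAdj_cycleGraph_iff (hn : 3 ≤ n) {σ : Sym2 (Fin n) → ℝ}
    (hσ : ∀ e ∈ (cycleGraph n).edgeSet, σ e = 1 ∨ σ e = -1) (x : Fin n → ℝ) :
    x ∈ ker (sAdj (cycleGraph n) σ).mulVecLin ↔
      switching (cycleSign σ) n x ∈ antiperiodicTwo.solSpace := by
  have hrow : ∀ k : ℕ, switching (cycleSign σ) n x (k + 2) + switching (cycleSign σ) n x k =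
      pathSign (cycleSign σ) (k + 1) * (sAdj (cycleGraph n) σ *ᵥ x) ((k : Fin n) + 1) :=
    fun k => by
    rw [switching_apply, switching_apply, sAdj_cycleGraph_mulVec_add_one hn,
      pathSign_switch_identity (cycleSign_mul_self (by omega) hσ) (fun k => x k)]
    simp [cycleSign, add_assoc, one_add_one_eq_two]
  rw [mem_ker, Matrix.mulVecLin_apply, antiperiodicTwo_mem_solSpace_iff]
  constructor
  · intro h k
    have hk := hrow k
    rw [h, Pi.zero_apply, mul_zero] at hk
    linear_combination hk
  · intro h
    funext i
    have hk := hrow (i - 1).val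
    rw [h, Fin.cast_val_eq_self, sub_add_cancel, neg_add_cancel] at hk
    exact (mul_eq_zero.1 hk.symm).resolve_left
      (pathSign_ne_zero (cycleSign_mul_self (by omega) hσ) _)

lemma finrank_ker_sAdj_cycleGraph (hn : 3 ≤ n) {σ : Sym2 (Fin n) → ℝ}
    (hσ : ∀ e ∈ (cycleGraph n).edgeSet, σ e = 1 ∨ σ e = -1) :
    finrank ℝ (ker (sAdj (cycleGraph n) σ).mulVecLin) =
      finrank ℝ ↥(range (switching (cycleSign σ) n) ⊓ antiperiodicTwo.solSpace) := by
  have hker : ker (sAdj (cycleGraph n) σ).mulVecLin =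
      antiperiodicTwo.solSpace.comap (switching (cycleSign σ) n) :=
    Submodule.ext (mem_ker_sAdj_cycleGraph_iff hn hσ)
  rw [hker, ← Submodule.map_comap_eq]
  exact (Submodule.equivMapOfInjective _
    (switching_injective (cycleSign_mul_self (by omega) hσ)) _).finrank_eq

lemma prod_edgeSet_cycleGraph (hn : 3 ≤ n) (σ : Sym2 (Fin n) → ℝ) :
    ∏ e ∈ (cycleGraph n).edgeSet.toFinset, σ e = pathSign (cycleSign σ) n := by
  have hedges : (cycleGraph n).edgeSet.toFinset = univ.image fun i : Fin n => s(i, i + 1) := by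
    ext e
    induction e using Sym2.ind with
    | _ u v =>
    simp only [Set.mem_toFinset, mem_edgeSet, cycleGraph_adj_iff (by omega : 2 ≤ n), mem_image,
      mem_univ, true_and, Sym2.eq_iff]
    constructor
    · rintro (h | h)
      · exact ⟨v, Or.inr ⟨rfl, by linear_combination -h⟩⟩
      · exact ⟨u, Or.inl ⟨rfl, by linear_combination -h⟩⟩
    · rintro ⟨i, ⟨rfl, rfl⟩ | ⟨rfl, rfl⟩⟩
      · right; ring
      · left; ring
  rw [hedges, prod_image, pathSign, ← Fin.prod_univ_eq_prod_range]
  · simp [cycleSign]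
  · intro i _ j _ h
    rcases Sym2.eq_iff.1 h with ⟨hij, -⟩ | ⟨hij, hji⟩
    · exact hij
    · exact absurd (by linear_combination hji - hij) (two_ne_zero_of_three_le hn)

lemma srank_cycleGraph_of_odd (hn : 3 ≤ n) {σ : Sym2 (Fin n) → ℝ}
    (hσ : ∀ e ∈ (cycleGraph n).edgeSet, σ e = 1 ∨ σ e = -1) (hodd : Odd n) :
    srank (cycleGraph n) σ = n := by
  have h := (sAdj (cycleGraph n) σ).rank_add_finrank_ker_mulVecLin
  rw [finrank_ker_sAdj_cycleGraph hn hσ, range_switching_inf_solSpace_of_odd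
    (cycleSign_mul_self (by omega) hσ) (cycleSign_periodic σ) hodd, finrank_bot,
    Fintype.card_fin] at h
  simpa [srank] using h

lemma srank_cycleGraph_of_even (hn : 3 ≤ n) {σ : Sym2 (Fin n) → ℝ}
    (hσ : ∀ e ∈ (cycleGraph n).edgeSet, σ e = 1 ∨ σ e = -1) {m : ℕ} (hm : n = 2 * m) :
    srank (cycleGraph n) σ =
      if ∏ e ∈ (cycleGraph n).edgeSet.toFinset, σ e = (-1) ^ m then n - 2 else n := by
  have he := cycleSign_mul_self (by omega) hσ
  have h := (sAdj (cycleGraph n) σ).rank_add_finrank_ker_mulVecLin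
  rw [finrank_ker_sAdj_cycleGraph hn hσ, Fintype.card_fin] at h
  rw [srank, prod_edgeSet_cycleGraph hn]
  split_ifs with hP
  · rw [inf_eq_right.2 (solSpace_le_range_switching he (cycleSign_periodic σ) hm hP),
      finrank_antiperiodicTwo_solSpace] at h
    omega
  · rw [range_switching_inf_solSpace_of_ne he (cycleSign_periodic σ) hm hP, finrank_bot] at h
    omega

end Cycle

end SignedCycle

theorem srank_cycle {n : ℕ} (hn : 3 ≤ n) (σ : Sym2 (Fin n) → ℝ)
    (hσ : ∀ e ∈ (cycleGraph n).edgeSet, σ e = 1 ∨ σ e = -1) :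
    (Odd n → srank (cycleGraph n) σ = n) ∧
    (n % 4 = 0 → ∏ e ∈ (cycleGraph n).edgeSet.toFinset, σ e = -1 →
      srank (cycleGraph n) σ = n) ∧
    (n % 4 = 2 → ∏ e ∈ (cycleGraph n).edgeSet.toFinset, σ e = 1 →
      srank (cycleGraph n) σ = n) ∧
    (n % 4 = 0 → ∏ e ∈ (cycleGraph n).edgeSet.toFinset, σ e = 1 →
      srank (cycleGraph n) σ = n - 2) ∧
    (n % 4 = 2 → ∏ e ∈ (cycleGraph n).edgeSet.toFinset, σ e = -1 →
      srank (cycleGraph n) σ = n - 2) := by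
  have : NeZero n := ⟨by omega⟩
  have hsrank (h2 : n % 2 = 0) :=
    SignedCycle.srank_cycleGraph_of_even hn hσ (m := n / 2) (by omega)
  have hpow0 (h4 : n % 4 = 0) : (-1 : ℝ) ^ (n / 2) = 1 := (Nat.even_iff.2 (by omega)).neg_one_pow
  have hpow2 (h4 : n % 4 = 2) : (-1 : ℝ) ^ (n / 2) = -1 := (Nat.odd_iff.2 (by omega)).neg_one_pow
  refine ⟨SignedCycle.srank_cycleGraph_of_odd hn hσ, fun h4 hP => ?_, fun h4 hP => ?_,
    fun h4 hP => ?_, fun h4 hP => ?_⟩ <;>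
  rw [hsrank (by omega), hP]
  · norm_num [hpow0 h4]
  · norm_num [hpow2 h4]
  · norm_num [hpow0 h4]
  · norm_num [hpow2 h4]
end
end

section
/- Let T be a tree with at least one edge and D ⊆ V(T) satisfy α(T) = α(T − D) + |D|. Then there exists a pendant vertex x of T with x ∉ D. -/
open SimpleGraph
open scoped Classical

noncomputable section

/-! It suffices to show `α(s) < α(s \ D) + |D|` for every vertex set `s` of a forest that spans
an edge and every `D` containing the pendant vertices of `s`; we induct on `|s|`. If `D` is not
independent this is immediate from `α(s) ≤ α(s \ D) + α(D)`. Otherwise let `u, v` be the first two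
vertices of a longest path in `s`: `u` is pendant, so `u ∈ D` and `v ∉ D`, all neighbours of `v`
but at most one are pendant, and `α(s) ≤ α(s \ {u, v}) + 1`. In `s' = s \ {u, v}` delete `D`
together with the neighbours of `v`. This covers the pendant vertices of `s'`, costs at most `|D|`
vertices (at most `|D| - 1` if `s'` spans no edge, when the induction hypothesis is unavailable),
and `v` extends every independent set of what is left to one of `s \ D`. -/

namespace SimpleGraph

open Finset

variable {V : Type*} {G : SimpleGraph V}

def indepNumOn (G : SimpleGraph V) (s : Finset V) : ℕ :=
  (s.powerset.filter fun t : Finset V => G.IsIndepSet (t : Set V)).sup card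

theorem IsIndepSet.card_le_indepNumOn {s t : Finset V} (ht : G.IsIndepSet (t : Set V))
    (hts : t ⊆ s) : #t ≤ indepNumOn G s :=
  le_sup (f := card) (mem_filter.2 ⟨mem_powerset.2 hts, ht⟩)

theorem exists_isIndepSet_card_eq_indepNumOn (G : SimpleGraph V) (s : Finset V) :
    ∃ t ⊆ s, G.IsIndepSet (t : Set V) ∧ #t = indepNumOn G s := by
  obtain ⟨t, ht, hmax⟩ := exists_mem_eq_sup
    (s.powerset.filter fun t : Finset V => G.IsIndepSet (t : Set V)) ⟨∅, by simp⟩ card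
  rw [mem_filter, mem_powerset] at ht
  exact ⟨t, ht.1, ht.2, hmax.symm⟩

theorem indepNumOn_le_card (s : Finset V) : indepNumOn G s ≤ #s := by
  obtain ⟨t, hts, -, hcard⟩ := exists_isIndepSet_card_eq_indepNumOn G s
  exact hcard ▸ card_le_card hts

theorem indepNumOn_add_one_le_card {s : Finset V} (hs : ¬ G.IsIndepSet (s : Set V)) :
    indepNumOn G s + 1 ≤ #s := by
  obtain ⟨t, hts, ht, hcard⟩ := exists_isIndepSet_card_eq_indepNumOn G s
  have hne : t ≠ s := by rintro rfl; exact hs ht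
  exact hcard ▸ card_lt_card (hts.ssubset_of_ne hne)

theorem indepNumOn_le_sdiff_add (s t : Finset V) :
    indepNumOn G s ≤ indepNumOn G (s \ t) + indepNumOn G t := by
  obtain ⟨I, hIs, hI, hcard⟩ := exists_isIndepSet_card_eq_indepNumOn G s
  have hout : #(I \ t) ≤ indepNumOn G (s \ t) :=
    IsIndepSet.card_le_indepNumOn (hI.mono (coe_subset.2 sdiff_subset))
      (sdiff_subset_sdiff hIs subset_rfl)
  have hin : #(I ∩ t) ≤ indepNumOn G t :=
    IsIndepSet.card_le_indepNumOn (hI.mono (coe_subset.2 inter_subset_left)) inter_subset_right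
  have := card_sdiff_add_card_inter I t
  omega

theorem indepNumOn_le_sdiff_add_card (s D : Finset V) :
    indepNumOn G s ≤ indepNumOn G (s \ D) + #D :=
  (indepNumOn_le_sdiff_add s D).trans (Nat.add_le_add_left (indepNumOn_le_card D) _)

theorem indepNumOn_add_one_le_of_not_isIndepSet (s : Finset V) {D : Finset V}
    (hD : ¬ G.IsIndepSet (D : Set V)) : indepNumOn G s + 1 ≤ indepNumOn G (s \ D) + #D := by
  have := indepNumOn_le_sdiff_add (G := G) s D
  have := indepNumOn_add_one_le_card hD
  omega

theorem indepNumOn_le_sdiff_pair_add_one (s : Finset V) {a b : V} (hab : G.Adj a b) :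
    indepNumOn G s ≤ indepNumOn G (s \ {a, b}) + 1 := by
  have hpair : ¬ G.IsIndepSet (({a, b} : Finset V) : Set V) := fun h =>
    h (by simp) (by simp) hab.ne hab
  have := indepNumOn_le_sdiff_add (G := G) s {a, b}
  have := indepNumOn_add_one_le_card hpair
  have := card_le_two (a := a) (b := b)
  omega

theorem indepNumOn_add_one_le_of_forall_not_adj {s t : Finset V} {x : V} (hx : x ∈ s)
    (hts : t ⊆ s) (hxt : x ∉ t) (hadj : ∀ y ∈ t, ¬ G.Adj x y) :
    indepNumOn G t + 1 ≤ indepNumOn G s := by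
  obtain ⟨I, hIt, hI, hcard⟩ := exists_isIndepSet_card_eq_indepNumOn G t
  have hxI : x ∉ I := fun h => hxt (hIt h)
  have hI' : G.IsIndepSet ((insert x I : Finset V) : Set V) := by
    rw [coe_insert]
    exact hI.insert fun y hy _ => ⟨hadj y (hIt hy), fun h => hadj y (hIt hy) h.symm⟩
  have := hI'.card_le_indepNumOn (insert_subset hx (hIt.trans hts))
  rw [card_insert_of_notMem hxI] at this
  omega

theorem indepNum_eq_indepNumOn_map {W : Type*} [Fintype W] {H : SimpleGraph W} (f : H ↪g G) :
    _root_.indepNum H = indepNumOn G (univ.map f.toEmbedding) := by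
  apply le_antisymm
  · refine csSup_le ⟨0, ∅, by simp, rfl⟩ ?_
    rintro n ⟨t, ht, rfl⟩
    rw [← card_map f.toEmbedding]
    refine IsIndepSet.card_le_indepNumOn ?_ (map_subset_map.2 (subset_univ t))
    rintro _ hfa _ hfb - hab
    obtain ⟨a, ha, rfl⟩ := mem_map.1 (mem_coe.1 hfa)
    obtain ⟨b, hb, rfl⟩ := mem_map.1 (mem_coe.1 hfb)
    exact ht a ha b hb (f.map_adj_iff.1 hab)
  · obtain ⟨t, hts, ht, hcard⟩ := exists_isIndepSet_card_eq_indepNumOn G (univ.map f.toEmbedding)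
    obtain ⟨t, -, rfl⟩ := subset_map_iff.1 hts
    have hbdd : BddAbove {n | ∃ t : Finset W, (∀ a ∈ t, ∀ b ∈ t, ¬ H.Adj a b) ∧ #t = n} :=
      ⟨Fintype.card W, by rintro n ⟨t, -, rfl⟩; exact card_le_univ t⟩
    refine hcard ▸ le_csSup hbdd ⟨t, fun a ha b hb hab => ?_, (card_map _).symm⟩
    exact ht (mem_map_of_mem _ ha) (mem_map_of_mem _ hb) (f.injective.ne hab.ne)
      (f.map_adj_iff.2 hab)

def IsPendantIn (G : SimpleGraph V) (s : Finset V) (x : V) : Prop :=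
  ∃ y ∈ s, ∀ z ∈ s, G.Adj x z ↔ z = y

theorem isPendantIn_of_forall_adj_eq {s : Finset V} {x y : V} (hy : y ∈ s) (hxy : G.Adj x y)
    (h : ∀ z ∈ s, G.Adj x z → z = y) : IsPendantIn G s x :=
  ⟨y, hy, fun z hz => ⟨h z hz, fun hzy => hzy ▸ hxy⟩⟩

theorem IsPendantIn.of_subset {s t : Finset V} {x : V} (hx : IsPendantIn G t x) (hts : t ⊆ s)
    (hnadj : ∀ z ∈ s \ t, ¬ G.Adj x z) : IsPendantIn G s x := by
  obtain ⟨y, hy, hxy⟩ := hx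
  refine ⟨y, hts hy, fun z hz => ?_⟩
  by_cases hzt : z ∈ t
  · exact hxy z hzt
  · exact iff_of_false (hnadj z (mem_sdiff.2 ⟨hz, hzt⟩)) fun hzy => hzt (hzy ▸ hy)

theorem IsPendantIn.of_sdiff_pair {s : Finset V} {u v x : V}
    (hx : IsPendantIn G (s \ {u, v}) x) (hxu : ¬ G.Adj x u) (hxv : ¬ G.Adj x v) :
    IsPendantIn G s x :=
  hx.of_subset sdiff_subset fun z hz => by
    obtain rfl | rfl : z = u ∨ z = v := by
      simp only [mem_sdiff, mem_insert, mem_singleton] at hz; tauto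
    exacts [hxu, hxv]

theorem isPendantIn_of_isIndepSet_sdiff_pair {s : Finset V} {u v x : V} (hv : v ∈ s)
    (hs : G.IsIndepSet ((s \ {u, v} : Finset V) : Set V)) (hx : x ∈ s \ {u, v})
    (hvx : G.Adj v x) (hxu : ¬ G.Adj x u) : IsPendantIn G s x :=
  isPendantIn_of_forall_adj_eq hv hvx.symm fun z hz hxz => by
    by_contra hzv
    have hzu : z ≠ u := fun h => hxu (h ▸ hxz)
    exact hs hx (by simp [hz, hzu, hzv]) hxz.ne hxz

theorem IsAcyclic.exists_adj_forall_adj_eq [Finite V] (hG : G.IsAcyclic) {a b : V}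
    (hab : G.Adj a b) :
    ∃ u v w, G.Adj u v ∧ u ≠ w ∧ ∀ x, G.Adj v x → x ≠ w → ∀ y, G.Adj x y → y = v := by
  have : Nonempty V := ⟨a⟩
  obtain ⟨u, z, p, hp, hmax⟩ := Walk.exists_isPath_forall_isPath_length_le_length G
  cases p with
  | nil => simpa using hmax _ _ _ (Walk.IsPath.nil.cons (u := a) (h := hab) (by simp [hab.ne]))
  | @cons _ v _ huv q =>
    have hq : q.IsPath := hp.of_cons
    have huq : u ∉ q.support := ((Walk.cons_isPath_iff _ _).1 hp).2
    refine ⟨u, v, q.snd, huv, fun h => huq (h ▸ q.getVert_mem_support 1),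
      fun x hvx hxw y hxy => ?_⟩
    by_contra hyv
    have hxq : x ∉ q.support := fun h => hxw (hG.eq_snd_of_adj_start hq hvx h)
    have hq' : (q.cons hvx.symm).IsPath := hq.cons hxq
    have hyq : y ∉ (q.cons hvx.symm).support := fun h =>
      hyv (by simpa using hG.eq_snd_of_adj_start hq' hxy h)
    simpa using hmax _ _ _ (hq'.cons hyq (h := hxy.symm))

theorem IsAcyclic.exists_adj_forall_adj_eq_of_not_isIndepSet (hG : G.IsAcyclic) {s : Finset V}
    (hs : ¬ G.IsIndepSet (s : Set V)) :
    ∃ u ∈ s, ∃ v ∈ s, ∃ w, G.Adj u v ∧ u ≠ w ∧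
      ∀ x ∈ s, G.Adj v x → x ≠ w → ∀ z ∈ s, G.Adj x z → z = v := by
  obtain ⟨a, ha, b, hb, -, hab⟩ : ∃ a ∈ s, ∃ b ∈ s, a ≠ b ∧ G.Adj a b := by
    simpa [Set.Pairwise] using hs
  obtain ⟨u, v, w, huv, huw, hpend⟩ :=
    (hG.induce (s : Set V)).exists_adj_forall_adj_eq (a := ⟨a, ha⟩) (b := ⟨b, hb⟩) hab
  refine ⟨u, u.2, v, v.2, w, huv, fun h => huw (Subtype.ext h), fun x hx hvx hxw z hz hxz => ?_⟩
  exact congrArg Subtype.val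
    (hpend ⟨x, hx⟩ hvx (fun h => hxw (congrArg Subtype.val h)) ⟨z, hz⟩ hxz)

theorem exists_forall_isPendantIn_sdiff_pair_mem {s D : Finset V} {u v w : V} (hv : v ∈ s)
    (hu_adj : ∀ z ∈ s, G.Adj u z → z = v) (huD : u ∈ D) (hvD : v ∉ D)
    (hD : ∀ x ∈ s, IsPendantIn G s x → x ∈ D) (hnbr : ∀ x ∈ s, G.Adj v x → x ≠ w → x ∈ D) :
    ∃ D', (∀ x ∈ s \ {u, v}, IsPendantIn G (s \ {u, v}) x → x ∈ D') ∧
      indepNumOn G ((s \ {u, v}) \ D') + 1 ≤ indepNumOn G (s \ D) ∧ #D' ≤ #D ∧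
      (G.IsIndepSet ((s \ {u, v} : Finset V) : Set V) → #D' + 1 ≤ #D) := by
  set s' := s \ {u, v} with hs'
  have hmem_s' : ∀ {x}, x ∈ s' ↔ x ∈ s ∧ x ≠ u ∧ x ≠ v := by simp [hs']
  have hnadj_u : ∀ x ∈ s', ¬ G.Adj x u := fun x hx h =>
    (hmem_s'.1 hx).2.2 (hu_adj x (hmem_s'.1 hx).1 h.symm)
  have hDu : #(D.erase u) + 1 = #D := card_erase_add_one huD
  refine ⟨{x ∈ s' | x ∈ D ∨ G.Adj v x}, fun x hx hpx => ?_, ?_, ?_, ?_⟩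
  · refine mem_filter.2 ⟨hx, (em (G.Adj v x)).elim Or.inr fun hvx => Or.inl ?_⟩
    exact hD x (hmem_s'.1 hx).1 (hpx.of_sdiff_pair (hnadj_u x hx) fun h => hvx h.symm)
  · refine indepNumOn_add_one_le_of_forall_not_adj (mem_sdiff.2 ⟨hv, hvD⟩) ?_ ?_ ?_
    · intro x hx
      obtain ⟨hx, hxD'⟩ := mem_sdiff.1 hx
      exact mem_sdiff.2 ⟨(hmem_s'.1 hx).1, fun hxD => hxD' (mem_filter.2 ⟨hx, Or.inl hxD⟩)⟩
    · exact fun h => (hmem_s'.1 (mem_sdiff.1 h).1).2.2 rfl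
    · intro x hx hvx
      obtain ⟨hx, hxD'⟩ := mem_sdiff.1 hx
      exact hxD' (mem_filter.2 ⟨hx, Or.inr hvx⟩)
  · refine (card_le_card fun x hx => ?_).trans ((card_insert_le w _).trans hDu.le)
    obtain ⟨hx, hxD | hvx⟩ := mem_filter.1 hx
    · exact mem_insert_of_mem (mem_erase.2 ⟨(hmem_s'.1 hx).2.1, hxD⟩)
    rcases eq_or_ne x w with rfl | hxw
    · exact mem_insert_self _ _
    · exact mem_insert_of_mem (mem_erase.2 ⟨(hmem_s'.1 hx).2.1, hnbr x (hmem_s'.1 hx).1 hvx hxw⟩)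
  · refine fun hs'_ind => hDu ▸ Nat.add_le_add_right (card_le_card fun x hx => ?_) 1
    obtain ⟨hx, hxD | hvx⟩ := mem_filter.1 hx
    · exact mem_erase.2 ⟨(hmem_s'.1 hx).2.1, hxD⟩
    · exact mem_erase.2 ⟨(hmem_s'.1 hx).2.1, hD x (hmem_s'.1 hx).1
        (isPendantIn_of_isIndepSet_sdiff_pair hv hs'_ind hx hvx (hnadj_u x hx))⟩

theorem IsAcyclic.indepNumOn_add_one_le (hG : G.IsAcyclic) {s D : Finset V}
    (hs : ¬ G.IsIndepSet (s : Set V)) (hD : ∀ x ∈ s, IsPendantIn G s x → x ∈ D) :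
    indepNumOn G s + 1 ≤ indepNumOn G (s \ D) + #D := by
  induction s using Finset.strongInduction generalizing D with
  | H s ih =>
  by_cases hDind : G.IsIndepSet (D : Set V)
  swap
  · exact indepNumOn_add_one_le_of_not_isIndepSet s hDind
  obtain ⟨u, hu, v, hv, w, huv, huw, hpend⟩ := hG.exists_adj_forall_adj_eq_of_not_isIndepSet hs
  have hu_adj : ∀ z ∈ s, G.Adj u z → z = v := hpend u hu huv.symm huw
  have huD : u ∈ D := hD u hu (isPendantIn_of_forall_adj_eq hv huv hu_adj)
  obtain ⟨D', hD', hext, hcard, hcard_ind⟩ := exists_forall_isPendantIn_sdiff_pair_mem hv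
    hu_adj huD (fun h => hDind huD h huv.ne huv) hD fun x hx hvx hxw =>
      hD x hx (isPendantIn_of_forall_adj_eq hv hvx.symm (hpend x hx hvx hxw))
  have hpair := indepNumOn_le_sdiff_pair_add_one s huv
  by_cases hs' : G.IsIndepSet ((s \ {u, v} : Finset V) : Set V)
  · have := indepNumOn_le_sdiff_add_card (G := G) (s \ {u, v}) D'
    have := hcard_ind hs'
    omega
  · have hss' : s \ {u, v} ⊂ s := sdiff_ssubset (by simp [insert_subset_iff, hu, hv]) (by simp)
    have := ih _ hss' hs' hD'
    omega

end SimpleGraph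

theorem exists_pendant_not_mem_general {V : Type*} [Fintype V] (T : SimpleGraph V)
    (hac : T.IsAcyclic) (hE : T.edgeSet.Nonempty)
    (D : Set V) (hD : _root_.indepNum T = _root_.indepNum (vdel T D) + D.ncard) :
    ∃ x : V, T.degree x = 1 ∧ x ∉ D := by
  by_contra! hpend
  have hT : ¬ T.IsIndepSet ((Finset.univ : Finset V) : Set V) := by
    obtain ⟨⟨a, b⟩, hab⟩ := hE
    exact fun h => h (by simp) (by simp) hab.ne hab
  have hα := hac.indepNumOn_add_one_le (D := D.toFinset) hT fun x _ ⟨y, _, hy⟩ =>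
    Set.mem_toFinset.2 <| hpend x <| degree_eq_one_iff_existsUnique_adj.2
      ⟨y, (hy y (Finset.mem_univ y)).2 rfl, fun z hz => (hy z (Finset.mem_univ z)).1 hz⟩
  have hT_eq : _root_.indepNum T = indepNumOn T Finset.univ := by
    simpa using indepNum_eq_indepNumOn_map (Embedding.refl : T ↪g T)
  have hTD_eq : _root_.indepNum (vdel T D) = indepNumOn T (Finset.univ \ D.toFinset) := by
    rw [vdel, indepNum_eq_indepNumOn_map (Embedding.induce _)]
    congr 1
    ext x
    simp
  rw [Set.ncard_eq_toFinset_card', hT_eq, hTD_eq] at hD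
  omega

theorem exists_pendant_not_mem {V : Type*} [Fintype V] (T : SimpleGraph V)
    (hconn : T.Connected) (hac : T.IsAcyclic) (hE : T.edgeSet.Nonempty)
    (D : Set V) (hD : _root_.indepNum T = _root_.indepNum (vdel T D) + D.ncard) :
    ∃ x : V, T.degree x = 1 ∧ x ∉ D :=
  exists_pendant_not_mem_general T hac hE D hD
end
end

section
/- A signed cycle (C_q, σ) satisfies r(C_q,σ) + 2α(C_q) = 2q − 2c(C_q) (i.e., it is lower-optimal) if and only if either q ≡ 0 (mod 4) and σ(C_q) = +1, or q ≡ 2 (mod 4) and σ(C_q) = −1. -/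
open SimpleGraph
open scoped Classical

noncomputable section

/-!
The kernel of the signed adjacency matrix of `C_q` consists of the vectors `x` with
`w k x k + w (k+1) x (k+2) = 0` for all `k`, indices read mod `q`, where `w k` is the sign of
the edge `{k, k+1}`. Switching by the prefix products `P k = ∏_{m<k} w m` turns this into the
unsigned recurrence `z (k+2) = -z k` for `z = P x`, while the `q`-periodicity of `x` becomes
`z (k+q) = σ(C_q) z k`. Hence the kernel is `0` unless `q` is even and `σ(C_q) = (-1)^(q/2)`,
in which case both parity classes of `z` are free and the nullity is `2`. Since `α = ⌊q/2⌋`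
and `c = 1`, the equality `r + 2α = 2q - 2` holds exactly in this second case.
-/

open Finset Function Module
open scoped Fin.NatCast Fin.CommRing Matrix

section Recurrence

variable {w y z : ℕ → ℝ} {q : ℕ}

theorem iterate_of_add_two_eq_neg (hz : ∀ k, z (k + 2) = -z k) (k j : ℕ) :
    z (k + 2 * j) = (-1) ^ j * z k := by
  induction j with
  | zero => simp
  | succ j ih => rw [Nat.mul_succ, ← add_assoc, hz, ih, pow_succ]; ring

theorem eq_zero_of_add_two_eq_neg (hz : ∀ k, z (k + 2) = -z k) (h0 : z 0 = 0) (h1 : z 1 = 0) :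
    z = 0 := by
  funext k
  rw [← Nat.mod_add_div k 2, iterate_of_add_two_eq_neg hz]
  rcases Nat.mod_two_eq_zero_or_one k with h | h <;> simp [h, h0, h1]

theorem prod_range_sq_eq_one (hw : ∀ k, w k ^ 2 = 1) (k : ℕ) : (∏ m ∈ range k, w m) ^ 2 = 1 := by
  rw [← prod_pow]
  exact prod_eq_one fun m _ => hw m

theorem prod_range_ne_zero (hw : ∀ k, w k ^ 2 = 1) (k : ℕ) : ∏ m ∈ range k, w m ≠ 0 := fun h => by
  simpa [h] using prod_range_sq_eq_one hw k

theorem prod_range_add_of_periodic (hwq : Periodic w q) (k : ℕ) :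
    ∏ m ∈ range (k + q), w m = (∏ m ∈ range q, w m) * ∏ m ∈ range k, w m := by
  rw [add_comm, prod_range_add]
  exact congrArg _ (prod_congr rfl fun m _ => by rw [add_comm, hwq])

theorem recurrence_iff_switch (hw : ∀ k, w k ^ 2 = 1) (k : ℕ) :
    w k * y k + w (k + 1) * y (k + 2) = 0 ↔
      (∏ m ∈ range (k + 2), w m) * y (k + 2) = -((∏ m ∈ range k, w m) * y k) := by
  have hwk : w k ≠ 0 := fun h => by simpa [h] using hw k
  have key : (∏ m ∈ range (k + 2), w m) * y (k + 2) + (∏ m ∈ range k, w m) * y k =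
      (∏ m ∈ range k, w m) * w k * (w k * y k + w (k + 1) * y (k + 2)) := by
    rw [prod_range_succ, prod_range_succ]
    linear_combination -(∏ m ∈ range k, w m) * y k * hw k
  rw [eq_neg_iff_add_eq_zero, key, mul_eq_zero,
    or_iff_right (mul_ne_zero (prod_range_ne_zero hw k) hwk)]

theorem recurrence_of_switch (hw : ∀ k, w k ^ 2 = 1) (hz : ∀ k, z (k + 2) = -z k) (k : ℕ) :
    w k * ((∏ m ∈ range k, w m) * z k) +
      w (k + 1) * ((∏ m ∈ range (k + 2), w m) * z (k + 2)) = 0 := by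
  refine (recurrence_iff_switch (y := fun k => (∏ m ∈ range k, w m) * z k) hw k).mpr ?_
  rw [← mul_assoc, ← mul_assoc, ← sq, ← sq, prod_range_sq_eq_one hw, prod_range_sq_eq_one hw,
    one_mul, one_mul, hz]

theorem eq_zero_of_recurrence (hw : ∀ k, w k ^ 2 = 1)
    (hy : ∀ k, w k * y k + w (k + 1) * y (k + 2) = 0) (h0 : y 0 = 0) (h1 : y 1 = 0) : y = 0 := by
  have hz := eq_zero_of_add_two_eq_neg (z := fun k => (∏ m ∈ range k, w m) * y k)
    (fun k => (recurrence_iff_switch hw k).mp (hy k)) (by simp [h0]) (by simp [h1])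
  funext k
  simpa [prod_range_ne_zero hw k] using congrFun hz k

theorem eq_zero_of_periodic_recurrence (hw : ∀ k, w k ^ 2 = 1) (hwq : Periodic w q)
    (hy : ∀ k, w k * y k + w (k + 1) * y (k + 2) = 0) (hyq : Periodic y q)
    (h : ¬(Even q ∧ ∏ m ∈ range q, w m = (-1) ^ (q / 2))) : y = 0 := by
  set W := ∏ m ∈ range q, w m
  set z : ℕ → ℝ := fun k => (∏ m ∈ range k, w m) * y k with hz_def
  have hz : ∀ k, z (k + 2) = -z k := fun k => (recurrence_iff_switch hw k).mp (hy k)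
  have hzq : ∀ k, z (k + q) = W * z k := fun k => by
    simp only [hz_def, hyq k, prod_range_add_of_periodic hwq]; ring
  suffices hz0 : ∀ k, z k = 0 by
    funext k
    exact (mul_eq_zero.mp (hz0 k)).resolve_left (prod_range_ne_zero hw k)
  intro k
  rcases Nat.even_or_odd q with ⟨j, hj⟩ | ⟨j, hj⟩
  · have hneq : W ≠ (-1) ^ j := fun hW => h ⟨⟨j, hj⟩, by rw [hW]; congr; omega⟩
    have := iterate_of_add_two_eq_neg hz k j
    rw [two_mul, ← hj, hzq] at this
    exact (mul_eq_mul_right_iff.mp this).resolve_left hneq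
  · have := iterate_of_add_two_eq_neg hz k q
    rw [two_mul, ← add_assoc, hzq, hzq, ← mul_assoc, ← sq, prod_range_sq_eq_one hw, hj,
      (odd_two_mul_add_one j).neg_one_pow] at this
    linarith

theorem periodic_switch (hw : ∀ k, w k ^ 2 = 1) (hwq : Periodic w q) (hz : ∀ k, z (k + 2) = -z k)
    (hq : Even q) (hW : ∏ m ∈ range q, w m = (-1) ^ (q / 2)) :
    Periodic (fun k => (∏ m ∈ range k, w m) * z k) q := fun k => by
  obtain ⟨j, rfl⟩ := hq
  have hzq : z (k + (j + j)) = (∏ m ∈ range (j + j), w m) * z k := by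
    rw [← two_mul, iterate_of_add_two_eq_neg hz, two_mul, hW, show (j + j) / 2 = j by omega]
  simp only [prod_range_add_of_periodic hwq, hzq]
  linear_combination (∏ m ∈ range k, w m) * z k * (prod_range_sq_eq_one hw (j + j))

def altSeq (a b : ℝ) (k : ℕ) : ℝ := (-1) ^ (k / 2) * if Even k then a else b

theorem altSeq_add_two (a b : ℝ) (k : ℕ) : altSeq a b (k + 2) = -altSeq a b k := by
  simp only [altSeq, Nat.add_div_right _ two_pos, pow_succ, Nat.even_add, even_two, iff_true]
  split_ifs <;> ring

end Recurrence

theorem mod_four_eq_iff_even_and_eq_neg_one_pow (q : ℕ) (W : ℝ) :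
    (q % 4 = 0 ∧ W = 1) ∨ (q % 4 = 2 ∧ W = -1) ↔ Even q ∧ W = (-1) ^ (q / 2) := by
  rcases Nat.even_or_odd (q / 2) with h | h <;> rw [h.neg_one_pow] <;> grind

theorem Fin.val_sub_ne_one_of_even {q : ℕ} {u v : Fin q} (hu : Even u.val) (hv : Even v.val)
    (hvq : v.val + 2 ≤ q) : (u - v).val ≠ 1 := by
  obtain ⟨a, ha⟩ := hu
  obtain ⟨b, hb⟩ := hv
  rcases le_or_gt v u with h | h
  · rw [Fin.coe_sub_iff_le.mpr h]; omega
  · rw [Fin.coe_sub_iff_lt.mpr h]; omega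

theorem sAdj_mulVec_apply {V : Type*} [Fintype V] (G : SimpleGraph V) [DecidableRel G.Adj]
    (σ : Sym2 V → ℝ) (x : V → ℝ) (i : V) :
    (sAdj G σ *ᵥ x) i = ∑ j ∈ G.neighborFinset i, σ s(i, j) * x j := by
  simp [sAdj, Matrix.mulVec, dotProduct, neighborFinset_eq_filter, sum_filter]

def cycleEdgeSign {q : ℕ} [NeZero q] (σ : Sym2 (Fin q) → ℝ) (k : ℕ) : ℝ :=
  σ s((k : Fin q), (k : Fin q) + 1)

theorem periodic_cycleEdgeSign {q : ℕ} [NeZero q] (σ : Sym2 (Fin q) → ℝ) :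
    Periodic (cycleEdgeSign σ) q := fun k => by
  simp [cycleEdgeSign]

theorem periodic_comp_natCast {q : ℕ} [NeZero q] (x : Fin q → ℝ) :
    Periodic (fun k : ℕ => x k) q := fun k => by
  simp

section CycleGraph

variable {n : ℕ} {σ : Sym2 (Fin (n + 3)) → ℝ}

theorem cycleGraph_adj_iff_eq_add_one {u v : Fin (n + 3)} :
    (cycleGraph (n + 3)).Adj u v ↔ v = u + 1 ∨ u = v + 1 := by
  rw [cycleGraph_adj, sub_eq_iff_eq_add, sub_eq_iff_eq_add, add_comm 1 u, add_comm 1 v, or_comm]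

theorem Fin.sub_one_ne_add_one (i : Fin (n + 3)) : i - 1 ≠ i + 1 := by
  rw [Ne, sub_eq_iff_eq_add, add_assoc, left_eq_add]
  exact ne_of_beq_false rfl

theorem injective_sym2_mk_add_one : Injective fun i : Fin (n + 3) => s(i, i + 1) := by
  intro i j h
  rcases Sym2.eq_iff.mp h with ⟨hij, -⟩ | ⟨hij, hji⟩
  · exact hij
  · rw [hij, add_assoc, add_eq_left] at hji
    exact absurd hji (ne_of_beq_false rfl)

theorem edgeSet_cycleGraph : (cycleGraph (n + 3)).edgeSet = Set.range fun i => s(i, i + 1) := by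
  ext e
  induction e with
  | h u v =>
    simp only [mem_edgeSet, cycleGraph_adj_iff_eq_add_one, Set.mem_range, Sym2.eq_iff]
    grind

theorem prod_edgeSet_cycleGraph (σ : Sym2 (Fin (n + 3)) → ℝ) :
    ∏ e ∈ (cycleGraph (n + 3)).edgeSet.toFinset, σ e = ∏ m ∈ range (n + 3), cycleEdgeSign σ m := by
  rw [Set.toFinset_congr edgeSet_cycleGraph, Set.toFinset_range,
    prod_image fun i _ j _ h => injective_sym2_mk_add_one h, ← Fin.prod_univ_eq_prod_range]
  simp [cycleEdgeSign]

theorem cyclomatic_cycleGraph : cyclomatic (cycleGraph (n + 3)) = 1 := by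
  have hc : Nat.card (cycleGraph (n + 3)).ConnectedComponent = 1 :=
    Nat.card_eq_one_iff_unique.mpr ⟨cycleGraph_preconnected.subsingleton_connectedComponent,
      ⟨(cycleGraph (n + 3)).connectedComponentMk 0⟩⟩
  rw [cyclomatic, edgeSet_cycleGraph, Set.ncard_range_of_injective injective_sym2_mk_add_one, hc]
  simp

theorem two_mul_card_le_of_isIndep {s : Finset (Fin (n + 3))}
    (hs : ∀ a ∈ s, ∀ b ∈ s, ¬(cycleGraph (n + 3)).Adj a b) : 2 * s.card ≤ n + 3 := by
  have hdisj : Disjoint s (s.map (Equiv.addRight 1).toEmbedding) := by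
    refine disjoint_right.mpr fun v hv hvs => ?_
    obtain ⟨u, hu, rfl⟩ := mem_map.mp hv
    exact hs u hu _ hvs (cycleGraph_adj_iff_eq_add_one.mpr (Or.inl rfl))
  simpa [two_mul, card_union_of_disjoint hdisj] using
    card_le_univ (s ∪ s.map (Equiv.addRight 1).toEmbedding)

theorem exists_isIndep_card_eq : ∃ s : Finset (Fin (n + 3)),
    (∀ a ∈ s, ∀ b ∈ s, ¬(cycleGraph (n + 3)).Adj a b) ∧ s.card = (n + 3) / 2 := by
  let f : Fin ((n + 3) / 2) ↪ Fin (n + 3) :=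
    ⟨fun j => ⟨2 * j, by omega⟩, fun i j h => Fin.ext (by simpa using h)⟩
  refine ⟨univ.map f, ?_, by simp⟩
  simp only [mem_map, mem_univ, true_and]
  rintro _ ⟨i, rfl⟩ _ ⟨j, rfl⟩
  have hi : 2 * i.val + 2 ≤ n + 3 := by omega
  have hj : 2 * j.val + 2 ≤ n + 3 := by omega
  rw [cycleGraph_adj', not_or]
  exact ⟨Fin.val_sub_ne_one_of_even (even_two_mul _) (even_two_mul _) hj,
    Fin.val_sub_ne_one_of_even (even_two_mul _) (even_two_mul _) hi⟩

theorem indepNum_cycleGraph : _root_.indepNum (cycleGraph (n + 3)) = (n + 3) / 2 :=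
  IsGreatest.csSup_eq ⟨exists_isIndep_card_eq, by
    rintro _ ⟨s, hs, rfl⟩
    have := two_mul_card_le_of_isIndep hs
    omega⟩

theorem sAdj_cycleGraph_mulVec_apply (σ : Sym2 (Fin (n + 3)) → ℝ) (x : Fin (n + 3) → ℝ) (k : ℕ) :
    (sAdj (cycleGraph (n + 3)) σ *ᵥ x) ((k + 1 : ℕ) : Fin (n + 3)) =
      cycleEdgeSign σ k * x k + cycleEdgeSign σ (k + 1) * x ((k + 2 : ℕ) : Fin (n + 3)) := by
  rw [sAdj_mulVec_apply, cycleGraph_neighborFinset, sum_pair (Fin.sub_one_ne_add_one _)]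
  simp [cycleEdgeSign, Sym2.eq_swap, add_assoc, one_add_one_eq_two]

theorem mem_ker_sAdj_cycleGraph_iff {x : Fin (n + 3) → ℝ} :
    x ∈ LinearMap.ker (sAdj (cycleGraph (n + 3)) σ).mulVecLin ↔
      ∀ k : ℕ, cycleEdgeSign σ k * x k +
        cycleEdgeSign σ (k + 1) * x ((k + 2 : ℕ) : Fin (n + 3)) = 0 := by
  simp only [LinearMap.mem_ker, Matrix.mulVecLin_apply, funext_iff, Pi.zero_apply,
    ← sAdj_cycleGraph_mulVec_apply]
  refine ⟨fun h k => h _, fun h i => ?_⟩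
  simpa using h (i - 1).val

theorem eq_zero_of_mem_ker_sAdj_cycleGraph (hw : ∀ k, cycleEdgeSign σ k ^ 2 = 1)
    {x : Fin (n + 3) → ℝ} (hx : x ∈ LinearMap.ker (sAdj (cycleGraph (n + 3)) σ).mulVecLin)
    (h0 : x 0 = 0) (h1 : x 1 = 0) : x = 0 := by
  have := eq_zero_of_recurrence (y := fun k : ℕ => x k) hw (mem_ker_sAdj_cycleGraph_iff.mp hx)
    (by simpa using h0) (by simpa using h1)
  funext i
  simpa using congrFun this i.val

theorem finrank_ker_sAdj_cycleGraph_le_two (hw : ∀ k, cycleEdgeSign σ k ^ 2 = 1) :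
    finrank ℝ (LinearMap.ker (sAdj (cycleGraph (n + 3)) σ).mulVecLin) ≤ 2 := by
  set K := LinearMap.ker (sAdj (cycleGraph (n + 3)) σ).mulVecLin
  let φ : K →ₗ[ℝ] ℝ × ℝ := ((LinearMap.proj 0).prod (LinearMap.proj 1)) ∘ₗ K.subtype
  have hφ : Injective φ := by
    rw [← LinearMap.ker_eq_bot, LinearMap.ker_eq_bot']
    rintro ⟨x, hx⟩ h
    exact Subtype.ext (eq_zero_of_mem_ker_sAdj_cycleGraph hw hx (congrArg Prod.fst h)
      (congrArg Prod.snd h))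
  simpa using LinearMap.finrank_le_finrank_of_injective hφ

theorem ker_sAdj_cycleGraph_eq_bot (hw : ∀ k, cycleEdgeSign σ k ^ 2 = 1)
    (h : ¬(Even (n + 3) ∧ ∏ m ∈ range (n + 3), cycleEdgeSign σ m = (-1) ^ ((n + 3) / 2))) :
    LinearMap.ker (sAdj (cycleGraph (n + 3)) σ).mulVecLin = ⊥ := by
  rw [LinearMap.ker_eq_bot']
  intro x hx
  have := eq_zero_of_periodic_recurrence (y := fun k : ℕ => x k) hw (periodic_cycleEdgeSign σ)
    (mem_ker_sAdj_cycleGraph_iff.mp hx) (periodic_comp_natCast x) h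
  funext i
  simpa using congrFun this i.val

def cycleKernelVector (σ : Sym2 (Fin (n + 3)) → ℝ) (a b : ℝ) (i : Fin (n + 3)) : ℝ :=
  (∏ m ∈ range i.val, cycleEdgeSign σ m) * altSeq a b i.val

theorem cycleKernelVector_natCast (hw : ∀ k, cycleEdgeSign σ k ^ 2 = 1) (hq : Even (n + 3))
    (hW : ∏ m ∈ range (n + 3), cycleEdgeSign σ m = (-1) ^ ((n + 3) / 2)) (a b : ℝ) (k : ℕ) :
    cycleKernelVector σ a b k = (∏ m ∈ range k, cycleEdgeSign σ m) * altSeq a b k := by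
  rw [cycleKernelVector, Fin.val_natCast,
    (periodic_switch hw (periodic_cycleEdgeSign σ) (altSeq_add_two a b) hq hW).map_mod_nat]

theorem cycleKernelVector_mem_ker (hw : ∀ k, cycleEdgeSign σ k ^ 2 = 1) (hq : Even (n + 3))
    (hW : ∏ m ∈ range (n + 3), cycleEdgeSign σ m = (-1) ^ ((n + 3) / 2)) (a b : ℝ) :
    cycleKernelVector σ a b ∈ LinearMap.ker (sAdj (cycleGraph (n + 3)) σ).mulVecLin :=
  mem_ker_sAdj_cycleGraph_iff.mpr fun k => by
    simpa only [cycleKernelVector_natCast hw hq hW] using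
      recurrence_of_switch hw (altSeq_add_two a b) k

theorem two_le_finrank_ker_sAdj_cycleGraph (hw : ∀ k, cycleEdgeSign σ k ^ 2 = 1)
    (hq : Even (n + 3)) (hW : ∏ m ∈ range (n + 3), cycleEdgeSign σ m = (-1) ^ ((n + 3) / 2)) :
    2 ≤ finrank ℝ (LinearMap.ker (sAdj (cycleGraph (n + 3)) σ).mulVecLin) := by
  set v := ![cycleKernelVector σ 1 0, cycleKernelVector σ 0 1]
  have hli : LinearIndependent ℝ v := by
    refine LinearIndependent.pair_iff.mpr fun s t hst => ?_
    have h0 := congrFun hst ((0 : ℕ) : Fin (n + 3))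
    have h1 := congrFun hst ((1 : ℕ) : Fin (n + 3))
    simp only [Pi.add_apply, Pi.smul_apply, smul_eq_mul, Pi.zero_apply,
      cycleKernelVector_natCast hw hq hW] at h0 h1
    norm_num [altSeq] at h0 h1
    exact ⟨h0, h1.resolve_right fun h => by simpa [h] using hw 0⟩
  have hvK : Set.range v ⊆ LinearMap.ker (sAdj (cycleGraph (n + 3)) σ).mulVecLin :=
    Set.range_subset_iff.mpr (Fin.forall_fin_two.mpr
      ⟨cycleKernelVector_mem_ker hw hq hW 1 0, cycleKernelVector_mem_ker hw hq hW 0 1⟩)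
  calc 2 = finrank ℝ (Submodule.span ℝ (Set.range v)) := by simp [finrank_span_eq_card hli]
    _ ≤ _ := Submodule.finrank_mono (Submodule.span_le.mpr hvK)

theorem srank_cycleGraph (hw : ∀ k, cycleEdgeSign σ k ^ 2 = 1) :
    srank (cycleGraph (n + 3)) σ =
      if Even (n + 3) ∧ ∏ m ∈ range (n + 3), cycleEdgeSign σ m = (-1) ^ ((n + 3) / 2)
      then n + 1 else n + 3 := by
  have hrk := LinearMap.finrank_range_add_finrank_ker (sAdj (cycleGraph (n + 3)) σ).mulVecLin
  rw [Module.finrank_fin_fun] at hrk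
  rw [srank, Matrix.rank]
  split_ifs with h
  · have := le_antisymm (finrank_ker_sAdj_cycleGraph_le_two hw)
      (two_le_finrank_ker_sAdj_cycleGraph hw h.1 h.2)
    omega
  · rw [ker_sAdj_cycleGraph_eq_bot hw h, finrank_bot] at hrk
    omega

end CycleGraph

theorem signedCycle_lowerOptimal_iff {q : ℕ} (hq : 3 ≤ q) (σ : Sym2 (Fin q) → ℝ)
    (hσ : ∀ e ∈ (cycleGraph q).edgeSet, σ e = 1 ∨ σ e = -1) :
    lowerOptimal (cycleGraph q) σ ↔
      (q % 4 = 0 ∧ ∏ e ∈ (cycleGraph q).edgeSet.toFinset, σ e = 1) ∨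
      (q % 4 = 2 ∧ ∏ e ∈ (cycleGraph q).edgeSet.toFinset, σ e = -1) := by
  obtain ⟨n, rfl⟩ : ∃ n, q = n + 3 := ⟨q - 3, by omega⟩
  have hw : ∀ k, cycleEdgeSign σ k ^ 2 = 1 := fun k => by
    rcases hσ _ (edgeSet_cycleGraph ▸ Set.mem_range_self (k : Fin (n + 3))) with h | h <;>
      simp [cycleEdgeSign, h]
  rw [lowerOptimal, srank_cycleGraph hw, indepNum_cycleGraph, cyclomatic_cycleGraph,
    Fintype.card_fin, prod_edgeSet_cycleGraph, mod_four_eq_iff_even_and_eq_neg_one_pow]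
  split_ifs with h
  · exact iff_of_true (by have := Nat.even_iff.mp h.1; omega) h
  · exact iff_of_false (by omega) h
end
end
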